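/- arXiv:0812.3999 — 7 statements merged into one kernel-verified Lean document; each statement's English description precedes it below -/
import Mathlib

section
/- Let a(x) = -1 for x < 0 and a(x) = 1 for x > 0, and define ψ(t,x) = sgn(x) if |x| < t and ψ(t,x) = 0 otherwise. Then ψ is a bounded measurable weak solution of the linear transport equation ∂_t ψ + ∂_x (a ψ) = 0 on (0,∞)×ℝ with zero initial data; precisely, for every test function θ ∈ C_c^∞(ℝ × ℝ) one has ∫_0^∞ ∫_ℝ ( ψ(t,x) ∂_t θ(t,x) + a(x) ψ(t,x) ∂_x θ(t,x) ) dx dt = 0, while ψ is not almost everywhere equal to zero on (0,∞)×ℝ. In particular, since the identically zero function is also a weak solution with zero initial data, the Cauchy problem for this equation admits at least two distinct bounded weak solutions. -/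
open MeasureTheory Set Filter Topology

/-- The discontinuous speed coefficient: `a(x) = -1` for `x < 0`, `a(x) = 1` for `x > 0`. -/
noncomputable def aCoeff (x : ℝ) : ℝ := if x < 0 then -1 else 1

/-- The nontrivial weak solution: `ψ(t,x) = sgn x` if `|x| < t`, and `0` otherwise. -/
noncomputable def psiSol (t x : ℝ) : ℝ :=
  if |x| < t then (if x < 0 then -1 else 1) else 0

lemma measurable_psiSol : Measurable (fun p : ℝ × ℝ => psiSol p.1 p.2) := by
  unfold psiSol
  exact Measurable.ite (measurableSet_lt measurable_snd.abs measurable_fst)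
    (Measurable.ite (measurableSet_lt measurable_snd measurable_const)
      measurable_const measurable_const) measurable_const

lemma measurable_aCoeff : Measurable aCoeff := by
  unfold aCoeff
  exact Measurable.ite (measurableSet_lt measurable_id measurable_const)
    measurable_const measurable_const

lemma abs_psiSol_le (t x : ℝ) : |psiSol t x| ≤ 1 := by
  unfold psiSol; split_ifs <;> norm_num

lemma abs_aCoeff_le (x : ℝ) : |aCoeff x| ≤ 1 := by
  unfold aCoeff; split_ifs <;> norm_num

lemma psiSol_nonpos {t : ℝ} (ht : t ≤ 0) (x : ℝ) : psiSol t x = 0 := by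
  unfold psiSol
  rw [if_neg]
  intro h
  have := abs_nonneg x
  linarith

lemma setIntegral_Ioi_comp_add (f : ℝ → ℝ) (c : ℝ) :
    ∫ u in Ioi (0:ℝ), f (u + c) = ∫ t in Ioi c, f t := by
  have A : MeasurableEmbedding (fun x : ℝ => x + c) :=
    (Homeomorph.addRight c).isClosedEmbedding.measurableEmbedding
  have h := A.setIntegral_map (μ := volume) f (Ioi c)
  rw [map_add_right_eq_self volume c] at h
  rw [h]
  have : (fun x : ℝ => x + c) ⁻¹' Ioi c = Ioi 0 := by
    ext x; simp [mem_preimage]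
  rw [this]

lemma weak_zero (θ : ℝ × ℝ → ℝ) (hθ : ContDiff ℝ (⊤ : ℕ∞) θ) (hsupp : HasCompactSupport θ) :
    (∫ t in Ioi (0 : ℝ), ∫ x : ℝ,
        (psiSol t x * fderiv ℝ θ (t, x) (1, 0)
          + aCoeff x * psiSol t x * fderiv ℝ θ (t, x) (0, 1))) = 0 := by
  have hθd : Differentiable ℝ θ := hθ.differentiable (by simp)
  have hfc : Continuous (fderiv ℝ θ) := hθ.continuous_fderiv (by simp)
  set T : ℝ × ℝ → ℝ := fun p => fderiv ℝ θ p (1, 0) with hTdef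
  set X : ℝ × ℝ → ℝ := fun p => fderiv ℝ θ p (0, 1) with hXdef
  have hTcont : Continuous T := hfc.clm_apply continuous_const
  have hXcont : Continuous X := hfc.clm_apply continuous_const
  have hTsupp : HasCompactSupport T := hsupp.fderiv_apply (𝕜 := ℝ) (1, 0)
  have hXsupp : HasCompactSupport X := hsupp.fderiv_apply (𝕜 := ℝ) (0, 1)
  obtain ⟨r, hr⟩ := hsupp.isBounded.subset_closedBall 0
  set R := max r 0 with hRdef
  have hR0 : 0 ≤ R := le_max_right r 0
  have hRsub : tsupport θ ⊆ Metric.closedBall 0 R :=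
    hr.trans (Metric.closedBall_subset_closedBall (le_max_left r 0))
  have hvan : ∀ q : ℝ × ℝ, R < max |q.1| |q.2| → T q = 0 ∧ X q = 0 ∧ θ q = 0 := by
    intro q hq
    have hout : q ∉ tsupport θ := by
      intro hmem
      have := hRsub hmem
      rw [Metric.mem_closedBall, dist_zero_right, Prod.norm_def] at this
      simp only [Real.norm_eq_abs] at this
      linarith
    have hθ0 : θ q = 0 := image_eq_zero_of_notMem_tsupport hout
    have hf0 : fderiv ℝ θ q = 0 := by
      by_contra h
      exact hout (tsupport_fderiv_subset ℝ (subset_closure h))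
    exact ⟨by simp [hTdef, hf0], by simp [hXdef, hf0], hθ0⟩
  -- the integrand as a function on the plane
  set F : ℝ × ℝ → ℝ :=
    fun p => psiSol p.1 p.2 * T p + aCoeff p.2 * psiSol p.1 p.2 * X p with hFdef
  have hFmeas : Measurable F := by
    exact (measurable_psiSol.mul hTcont.measurable).add
      (((measurable_aCoeff.comp measurable_snd).mul measurable_psiSol).mul hXcont.measurable)
  have hFint : Integrable F := by
    refine ((hTcont.norm.add hXcont.norm).integrable_of_hasCompactSupport
      ((hTsupp.norm).add (hXsupp.norm))).mono' hFmeas.aestronglyMeasurable ?_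
    refine ae_of_all _ (fun p => ?_)
    have h1 := abs_psiSol_le p.1 p.2
    have h2 := abs_aCoeff_le p.2
    have h3 := abs_nonneg (T p)
    have h4 := abs_nonneg (X p)
    have h5 := abs_nonneg (psiSol p.1 p.2)
    have h6 := abs_nonneg (aCoeff p.2)
    calc ‖F p‖ ≤ ‖psiSol p.1 p.2 * T p‖ + ‖aCoeff p.2 * psiSol p.1 p.2 * X p‖ := norm_add_le _ _
    _ ≤ ‖T p‖ + ‖X p‖ := by
        simp only [Real.norm_eq_abs, abs_mul]
        nlinarith [mul_le_one₀ h2 h5 h1]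
  -- line-integrability helpers
  have hInt1 : ∀ x : ℝ, Integrable (fun t => T (t, x) + X (t, x)) := by
    intro x
    apply Continuous.integrable_of_hasCompactSupport
    · exact (hTcont.comp (continuous_id.prodMk continuous_const)).add
        (hXcont.comp (continuous_id.prodMk continuous_const))
    · apply HasCompactSupport.intro (isCompact_Icc (a := -R) (b := R))
      intro t ht
      have htR : R < |t| := by
        rw [lt_abs]
        simp only [mem_Icc, not_and_or, not_le] at ht
        rcases ht with h | h
        · right; linarith
        · left; linarith
      have h1 := hvan (t, x) (lt_max_iff.mpr (Or.inl htR))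
      simp [h1.1, h1.2.1]
  have hInt2 : ∀ x : ℝ, Integrable (fun t => -T (t, -x) + X (t, -x)) := by
    intro x
    apply Continuous.integrable_of_hasCompactSupport
    · exact ((hTcont.comp (continuous_id.prodMk continuous_const)).neg).add
        (hXcont.comp (continuous_id.prodMk continuous_const))
    · apply HasCompactSupport.intro (isCompact_Icc (a := -R) (b := R))
      intro t ht
      have htR : R < |t| := by
        rw [lt_abs]
        simp only [mem_Icc, not_and_or, not_le] at ht
        rcases ht with h | h
        · right; linarith
        · left; linarith
      have h1 := hvan (t, -x) (lt_max_iff.mpr (Or.inl htR))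
      simp [h1.1, h1.2.1]
  -- the combined slice function
  set g : ℝ → ℝ → ℝ :=
    fun t x => (-T (t, -x) + X (t, -x)) + (T (t, x) + X (t, x)) with hgdef
  -- pointwise identification of F on vertical lines
  have hFpos : ∀ x : ℝ, 0 < x → ∀ t : ℝ,
      F (t, x) = (Ioi x).indicator (fun t => T (t, x) + X (t, x)) t := by
    intro x hx t
    simp only [hFdef, psiSol, aCoeff, abs_of_pos hx, if_neg (asymm hx),
      indicator_apply, mem_Ioi]
    split_ifs <;> ring
  have hFneg : ∀ x : ℝ, 0 < x → ∀ t : ℝ,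
      F (t, -x) = (Ioi x).indicator (fun t => -T (t, -x) + X (t, -x)) t := by
    intro x hx t
    have h1 : |(-x)| = x := by rw [abs_neg, abs_of_pos hx]
    have h2 : -x < 0 := neg_lt_zero.mpr hx
    simp only [hFdef, psiSol, aCoeff, h1, if_pos h2, indicator_apply, mem_Ioi]
    split_ifs <;> ring
  -- step 1: extend the t-integral to all of ℝ
  have step1 : (∫ t in Ioi (0:ℝ), ∫ x : ℝ,
        (psiSol t x * T (t, x) + aCoeff x * psiSol t x * X (t, x)))
      = ∫ t : ℝ, ∫ x : ℝ, F (t, x) := by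
    apply setIntegral_eq_integral_of_forall_compl_eq_zero
    intro t ht
    have ht' : t ≤ 0 := le_of_not_gt (by simpa [mem_Ioi] using ht)
    have hz : (fun x => F (t, x)) = fun _ => 0 :=
      funext (fun x => by simp [hFdef, psiSol_nonpos ht'])
    show (∫ x : ℝ, F (t, x)) = 0
    rw [hz, integral_zero]
  have hFint' : Integrable F (volume.prod volume) := by
    rwa [← Measure.volume_eq_prod ℝ ℝ]
  have swap1 : (∫ t : ℝ, ∫ x : ℝ, F (t, x)) = ∫ x : ℝ, ∫ t : ℝ, F (t, x) := by
    exact integral_integral_swap hFint'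
  have hJint : Integrable (fun x => ∫ t : ℝ, F (t, x)) := hFint'.integral_prod_right
  have split : (∫ x : ℝ, ∫ t : ℝ, F (t, x))
      = (∫ x in Iic (0:ℝ), ∫ t : ℝ, F (t, x)) + ∫ x in Ioi (0:ℝ), ∫ t : ℝ, F (t, x) :=
    (intervalIntegral.integral_Iic_add_Ioi hJint.integrableOn hJint.integrableOn).symm
  have hrefl : (∫ x in Iic (0:ℝ), ∫ t : ℝ, F (t, x))
      = ∫ x in Ioi (0:ℝ), ∫ t : ℝ, F (t, -x) := by
    have h := integral_comp_neg_Ioi 0 (fun x => ∫ t : ℝ, F (t, x))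
    rw [neg_zero] at h
    exact h.symm
  have hJnegint : IntegrableOn (fun x => ∫ t : ℝ, F (t, -x)) (Ioi (0:ℝ)) := by
    have h : Integrable ((fun x => ∫ t : ℝ, F (t, x)) ∘ (fun x : ℝ => -x)) :=
      ((Measure.measurePreserving_neg volume).integrable_comp
        hJint.aestronglyMeasurable).mpr hJint
    exact h.integrableOn
  have combine : (∫ x in Ioi (0:ℝ), ∫ t : ℝ, F (t, -x)) + (∫ x in Ioi (0:ℝ), ∫ t : ℝ, F (t, x))
      = ∫ x in Ioi (0:ℝ), ((∫ t : ℝ, F (t, -x)) + ∫ t : ℝ, F (t, x)) :=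
    (integral_add hJnegint hJint.integrableOn).symm
  have key : ∀ x ∈ Ioi (0:ℝ),
      ((∫ t : ℝ, F (t, -x)) + ∫ t : ℝ, F (t, x)) = ∫ u in Ioi (0:ℝ), g (u + x) x := by
    intro x hx
    rw [mem_Ioi] at hx
    have e1 : (∫ t : ℝ, F (t, x)) = ∫ t in Ioi x, (T (t, x) + X (t, x)) := by
      rw [funext (hFpos x hx), integral_indicator measurableSet_Ioi]
    have e2 : (∫ t : ℝ, F (t, -x)) = ∫ t in Ioi x, (-T (t, -x) + X (t, -x)) := by
      rw [funext (hFneg x hx), integral_indicator measurableSet_Ioi]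
    rw [e1, e2, ← integral_add ((hInt2 x).integrableOn) ((hInt1 x).integrableOn),
      ← setIntegral_Ioi_comp_add (fun t => g t x) x]
  -- continuity / support of the sheared function
  have c1 : Continuous (fun p : ℝ × ℝ => (p.2 + p.1, p.1)) :=
    (continuous_snd.add continuous_fst).prodMk continuous_fst
  have c2 : Continuous (fun p : ℝ × ℝ => (p.2 + p.1, -p.1)) :=
    (continuous_snd.add continuous_fst).prodMk continuous_fst.neg
  have hgc : Continuous (fun p : ℝ × ℝ => g (p.2 + p.1) p.1) := by
    exact (((hTcont.comp c2).neg).add (hXcont.comp c2)).add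
      ((hTcont.comp c1).add (hXcont.comp c1))
  have hgsupp : HasCompactSupport (fun p : ℝ × ℝ => g (p.2 + p.1) p.1) := by
    apply HasCompactSupport.intro (isCompact_closedBall (0 : ℝ × ℝ) (2*R+1))
    intro p hp
    rw [Metric.mem_closedBall, dist_zero_right, Prod.norm_def] at hp
    simp only [Real.norm_eq_abs, not_le] at hp
    by_cases h1 : R < |p.1|
    · have A := hvan (p.2 + p.1, p.1) (lt_max_iff.mpr (Or.inr h1))
      have B := hvan (p.2 + p.1, -p.1) (lt_max_iff.mpr (Or.inr (by rwa [abs_neg])))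
      simp [hgdef, A.1, A.2.1, B.1, B.2.1]
    · push_neg at h1
      have h2 : 2*R+1 < |p.2| := by
        rcases lt_max_iff.mp hp with h | h
        · linarith
        · exact h
      have h3 : R < |p.2 + p.1| := by
        have := abs_add_le (p.2 + p.1) (-p.1)
        rw [abs_neg] at this
        have : |p.2| ≤ |p.2 + p.1| + |p.1| := by
          calc |p.2| = |(p.2 + p.1) + (-p.1)| := by ring_nf
          _ ≤ |p.2 + p.1| + |(-p.1)| := abs_add_le _ _
          _ = |p.2 + p.1| + |p.1| := by rw [abs_neg]
        linarith
      have A := hvan (p.2 + p.1, p.1) (lt_max_iff.mpr (Or.inl h3))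
      have B := hvan (p.2 + p.1, -p.1) (lt_max_iff.mpr (Or.inl h3))
      simp [hgdef, A.1, A.2.1, B.1, B.2.1]
  have swap2 : (∫ x in Ioi (0:ℝ), ∫ u in Ioi (0:ℝ), g (u + x) x)
      = ∫ u in Ioi (0:ℝ), ∫ x in Ioi (0:ℝ), g (u + x) x := by
    apply integral_integral_swap
    show Integrable (Function.uncurry fun x u => g (u + x) x) _
    rw [Measure.prod_restrict]
    apply Integrable.integrableOn
    rw [← Measure.volume_eq_prod ℝ ℝ]
    exact hgc.integrable_of_hasCompactSupport hgsupp
  have inner0 : ∀ u ∈ Ioi (0:ℝ), (∫ x in Ioi (0:ℝ), g (u + x) x) = 0 := by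
    intro u _
    set k : ℝ → ℝ := fun x => θ (u + x, x) - θ (u + x, -x) with hkdef
    have hkd : ∀ x : ℝ, HasDerivAt k (g (u + x) x) x := by
      intro x
      have d1 : HasDerivAt (fun x : ℝ => (u + x, x)) ((1:ℝ), (1:ℝ)) x :=
        ((hasDerivAt_id x).const_add u).prodMk (hasDerivAt_id x)
      have d2 : HasDerivAt (fun x : ℝ => (u + x, -x)) ((1:ℝ), (-1:ℝ)) x :=
        ((hasDerivAt_id x).const_add u).prodMk ((hasDerivAt_id x).neg)
      have D1 : HasDerivAt (fun x : ℝ => θ (u + x, x)) (fderiv ℝ θ (u + x, x) (1, 1)) x :=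
        (hθd _).hasFDerivAt.comp_hasDerivAt x d1
      have D2 : HasDerivAt (fun x : ℝ => θ (u + x, -x)) (fderiv ℝ θ (u + x, -x) (1, -1)) x :=
        (hθd _).hasFDerivAt.comp_hasDerivAt x d2
      have h := D1.sub D2
      refine h.congr_deriv ?_; symm
      have e1 : ((1:ℝ), (1:ℝ)) = ((1:ℝ), (0:ℝ)) + ((0:ℝ), (1:ℝ)) := by norm_num
      have e2 : ((1:ℝ), (-1:ℝ)) = ((1:ℝ), (0:ℝ)) - ((0:ℝ), (1:ℝ)) := by norm_num
      rw [hgdef, e1, e2, map_add, map_sub]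
      simp only [hTdef, hXdef]
      ring
    have hkcont : Continuous k := by
      rw [hkdef]
      exact ((hθ.continuous).comp ((continuous_const.add continuous_id).prodMk continuous_id)).sub
        ((hθ.continuous).comp ((continuous_const.add continuous_id).prodMk continuous_id.neg))
    have hk0 : k 0 = 0 := by simp [hkdef]
    have hint : IntegrableOn (fun x => g (u + x) x) (Ioi (0:ℝ)) := by
      apply Integrable.integrableOn
      apply Continuous.integrable_of_hasCompactSupport
      · exact hgc.comp (continuous_id.prodMk continuous_const)
      · apply HasCompactSupport.intro (isCompact_Icc (a := -R) (b := R))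
        intro x hx
        have hxR : R < |x| := by
          rw [lt_abs]
          simp only [mem_Icc, not_and_or, not_le] at hx
          rcases hx with h | h
          · right; linarith
          · left; linarith
        have A := hvan (u + x, x) (lt_max_iff.mpr (Or.inr hxR))
        have B := hvan (u + x, -x) (lt_max_iff.mpr (Or.inr (by rwa [abs_neg])))
        simp [hgdef, A.1, A.2.1, B.1, B.2.1]
    have htend : Tendsto k atTop (𝓝 (0:ℝ)) := by
      refine Tendsto.congr' ?_ tendsto_const_nhds
      filter_upwards [Ioi_mem_atTop R] with x hx
      rw [mem_Ioi] at hx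
      have hx0 : R < |x| := by rw [abs_of_pos (lt_of_le_of_lt hR0 hx)]; exact hx
      have A := hvan (u + x, x) (lt_max_iff.mpr (Or.inr hx0))
      have B := hvan (u + x, -x) (lt_max_iff.mpr (Or.inr (by rwa [abs_neg])))
      simp [hkdef, A.2.2, B.2.2]
    have hres := integral_Ioi_of_hasDerivAt_of_tendsto
      hkcont.continuousWithinAt (fun x _ => hkd x) hint htend
    rw [hres, hk0, sub_zero]
  calc (∫ t in Ioi (0:ℝ), ∫ x : ℝ,
        (psiSol t x * T (t, x) + aCoeff x * psiSol t x * X (t, x)))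
      = ∫ x in Ioi (0:ℝ), ∫ u in Ioi (0:ℝ), g (u + x) x := by
        rw [step1, swap1, split, hrefl, combine]
        exact setIntegral_congr_fun measurableSet_Ioi key
    _ = ∫ u in Ioi (0:ℝ), ∫ x in Ioi (0:ℝ), g (u + x) x := swap2
    _ = 0 := by
        rw [setIntegral_congr_fun measurableSet_Ioi (fun u hu => inner0 u hu)]
        simp


/-- `ψ` is a bounded measurable weak solution of `∂ₜψ + ∂ₓ(aψ) = 0` on `(0,∞) × ℝ`
with zero initial data, and `ψ` is not a.e. zero there; hence (together with the
identically zero solution) the Cauchy problem admits at least two distinct bounded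
weak solutions. -/
theorem stmt_0 :
    Measurable (fun p : ℝ × ℝ => psiSol p.1 p.2) ∧
    (∀ t x : ℝ, |psiSol t x| ≤ 1) ∧
    (∀ θ : ℝ × ℝ → ℝ, ContDiff ℝ (⊤ : ℕ∞) θ → HasCompactSupport θ →
      (∫ t in Ioi (0 : ℝ), ∫ x : ℝ,
          (psiSol t x * fderiv ℝ θ (t, x) (1, 0)
            + aCoeff x * psiSol t x * fderiv ℝ θ (t, x) (0, 1))) = 0) ∧
    ¬ (∀ᵐ p : ℝ × ℝ ∂(volume.restrict (Ioi (0 : ℝ) ×ˢ (univ : Set ℝ))),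
        psiSol p.1 p.2 = 0) := by
  refine ⟨measurable_psiSol, abs_psiSol_le, weak_zero, ?_⟩
  intro h
  set S : Set (ℝ × ℝ) := {p | 0 < p.2 ∧ p.2 < p.1} with hSdef
  have hSopen : IsOpen S := by
    have : S = {p : ℝ × ℝ | 0 < p.2} ∩ {p : ℝ × ℝ | p.2 < p.1} := rfl
    rw [this]
    exact (isOpen_lt continuous_const continuous_snd).inter
      (isOpen_lt continuous_snd continuous_fst)
  have hSne : S.Nonempty := ⟨(2, 1), by constructor <;> norm_num⟩
  have hSpos : 0 < volume S := hSopen.measure_pos volume hSne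
  have hsub : S ⊆ {p : ℝ × ℝ | ¬ psiSol p.1 p.2 = 0} := by
    intro p hp
    obtain ⟨h1, h2⟩ := hp
    show ¬ psiSol p.1 p.2 = 0
    unfold psiSol
    rw [abs_of_pos h1, if_pos h2, if_neg (asymm h1)]
    norm_num
  have h0 : volume.restrict (Ioi (0 : ℝ) ×ˢ (univ : Set ℝ)) {p : ℝ × ℝ | ¬ psiSol p.1 p.2 = 0} = 0 :=
    ae_iff.mp h
  have hS0 : volume.restrict (Ioi (0 : ℝ) ×ˢ (univ : Set ℝ)) S = 0 :=
    measure_mono_null hsub h0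
  rw [Measure.restrict_apply hSopen.measurableSet] at hS0
  have hSsub : S ∩ (Ioi (0 : ℝ) ×ˢ (univ : Set ℝ)) = S := by
    apply inter_eq_self_of_subset_left
    intro p hp
    exact ⟨lt_trans hp.1 hp.2, trivial⟩
  rw [hSsub] at hS0
  exact absurd hS0 (ne_of_gt hSpos)
end

section
/- Let f : ℝ → ℝ be continuously differentiable, let u_l ≠ u_r be two states, and let λ := (f(u_r) − f(u_l))/(u_r − u_l) be the Rankine–Hugoniot speed, so that u(t,x) = u_l for x < λt and u(t,x) = u_r for x > λt is a shock-wave weak solution of ∂_t u + ∂_x f(u) = 0. Let ψ_l, ψ_r ∈ ℝ and set C_l := (λ − f'(u_l)) ψ_l and C_r := (λ − f'(u_r)) ψ_r. Then the time-parametrized family of measures ψ(t) = ψ_l·Leb restricted to (−∞, λt) + ψ_r·Leb restricted to (λt, ∞) + t (C_r − C_l) δ_{λt} is a measure-valued weak solution of the linearized equation ∂_t ψ + ∂_x ( \widehat{f'}(u) ψ ) = 0, where the Volpert value of the coefficient at the atom located on the shock line equals ∫_0^1 f'(u_l + s(u_r − u_l)) ds = λ. Precisely, for every test function θ ∈ C_c^∞(ℝ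 × ℝ): ∫_0^∞ [ ψ_l ∫_{−∞}^{λt} ( ∂_t θ(t,x) + f'(u_l) ∂_x θ(t,x) ) dx + ψ_r ∫_{λt}^{∞} ( ∂_t θ(t,x) + f'(u_r) ∂_x θ(t,x) ) dx + t (C_r − C_l) ( ∂_t θ(t, λt) + λ ∂_x θ(t, λt) ) ] dt + ψ_l ∫_{−∞}^0 θ(0,x) dx + ψ_r ∫_0^∞ θ(0,x) dx = 0. -/
open MeasureTheory Set Filter

private lemma aux_fderiv_zero {g : ℝ×ℝ → ℝ} {R : ℝ} (hR : tsupport g ⊆ Metric.closedBall 0 R)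
    {p : ℝ×ℝ} (hp : R < ‖p‖) : fderiv ℝ g p = 0 := by
  by_contra h
  have hmem : p ∈ tsupport g := support_fderiv_subset ℝ (Function.mem_support.2 h)
  have := hR hmem
  rw [Metric.mem_closedBall, dist_zero_right] at this
  linarith

private lemma aux_g_zero {g : ℝ×ℝ → ℝ} {R : ℝ} (hR : tsupport g ⊆ Metric.closedBall 0 R)
    {p : ℝ×ℝ} (hp : R < ‖p‖) : g p = 0 := by
  apply image_eq_zero_of_notMem_tsupport
  intro hmem
  have := hR hmem
  rw [Metric.mem_closedBall, dist_zero_right] at this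
  linarith

/-- Differentiation under the integral sign over a fixed set, for `C¹` compactly
supported functions on `ℝ × ℝ`. -/
private lemma aux_hasDerivAt_param (g : ℝ×ℝ → ℝ) (hg : ContDiff ℝ 1 g)
    (hgc : HasCompactSupport g) (s : Set ℝ) (t : ℝ) :
    HasDerivAt (fun τ => ∫ y in s, g (τ, y)) (∫ y in s, fderiv ℝ g (t, y) (1, 0)) t := by
  obtain ⟨R, hR⟩ := hgc.isBounded.subset_closedBall 0
  obtain ⟨M, hM⟩ := (hgc.fderiv ℝ).exists_bound_of_continuous (hg.continuous_fderiv one_ne_zero)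
  have hnorm : ∀ a b : ℝ, ‖b‖ ≤ ‖((a,b) : ℝ×ℝ)‖ :=
    fun a b => by simpa using norm_snd_le ((a, b) : ℝ×ℝ)
  have key : ∀ τ y : ℝ, y ∉ Icc (-R) R → fderiv ℝ g (τ, y) = 0 := by
    intro τ y hy
    apply aux_fderiv_zero hR
    have : R < |y| := by
      rw [Set.mem_Icc, not_and_or] at hy
      rcases hy with h | h
      · have := not_le.1 h; linarith [neg_abs_le y]
      · have := not_le.1 h; linarith [le_abs_self y]
    calc R < |y| := this
      _ = ‖y‖ := rfl
      _ ≤ ‖((τ, y) : ℝ×ℝ)‖ := hnorm τ y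
  have keyg : ∀ τ y : ℝ, y ∉ Icc (-R) R → g (τ, y) = 0 := by
    intro τ y hy
    by_contra h
    have hmem : (τ, y) ∈ tsupport g := subset_tsupport _ h
    have h1 := hR hmem
    rw [Metric.mem_closedBall, dist_zero_right] at h1
    have h2 : |y| ≤ R := by simpa using le_trans (hnorm τ y) h1
    exact hy (Set.mem_Icc.2 (abs_le.1 h2))
  set bound : ℝ → ℝ := (Icc (-R) R).indicator (fun _ => M) with hbound
  refine (hasDerivAt_integral_of_dominated_loc_of_deriv_le (F := fun τ y => g (τ, y))
    (F' := fun τ y => fderiv ℝ g (τ, y) (1, 0)) (bound := bound) (Metric.ball_mem_nhds t one_pos) ?_ ?_ ?_ ?_ ?_ ?_).2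
  · exact Eventually.of_forall fun τ =>
      (hg.continuous.comp (Continuous.prodMk_right τ)).aestronglyMeasurable
  · refine ((Continuous.integrable_of_hasCompactSupport
      (hg.continuous.comp (Continuous.prodMk_right t)) ?_)).restrict
    exact HasCompactSupport.intro isCompact_Icc (fun y hy => keyg t y hy)
  · exact (((hg.continuous_fderiv one_ne_zero).comp (Continuous.prodMk_right t)).clm_apply
      continuous_const).aestronglyMeasurable
  · refine Eventually.of_forall fun y => fun τ _ => ?_
    show ‖fderiv ℝ g (τ, y) (1, 0)‖ ≤ bound y
    by_cases hy : y ∈ Icc (-R) R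
    · rw [hbound, indicator_of_mem hy]
      calc ‖fderiv ℝ g (τ, y) (1, 0)‖ ≤ ‖fderiv ℝ g (τ, y)‖ * ‖((1 : ℝ), (0 : ℝ))‖ :=
            ContinuousLinearMap.le_opNorm _ _
        _ ≤ M * 1 := by
            refine mul_le_mul (hM _) ?_ (norm_nonneg _) (le_trans (norm_nonneg _) (hM (τ, y)))
            rw [Prod.norm_def]; simp
        _ = M := mul_one M
    · rw [hbound, indicator_of_notMem hy, key τ y hy]
      simp
  · exact ((integrableOn_const (C := M) measure_Icc_lt_top.ne).integrable_indicator
      measurableSet_Icc).restrict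
  · refine Eventually.of_forall fun y => fun τ _ => ?_
    exact ((hg.differentiable one_ne_zero (τ, y)).hasFDerivAt).comp_hasDerivAt τ
      ((hasDerivAt_id τ).prodMk (hasDerivAt_const τ y))

/-- Continuity of the parametric integral of the `t`-partial-derivative. -/
private lemma aux_cont_param (g : ℝ×ℝ → ℝ) (hg : ContDiff ℝ 1 g)
    (hgc : HasCompactSupport g) (s : Set ℝ) :
    Continuous fun τ => ∫ y in s, fderiv ℝ g (τ, y) (1, 0) := by
  obtain ⟨R, hR⟩ := hgc.isBounded.subset_closedBall 0
  obtain ⟨M, hM⟩ := (hgc.fderiv ℝ).exists_bound_of_continuous (hg.continuous_fderiv one_ne_zero)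
  have key : ∀ τ y : ℝ, y ∉ Icc (-R) R → fderiv ℝ g (τ, y) = 0 := by
    intro τ y hy
    apply aux_fderiv_zero hR
    have : R < |y| := by
      rw [Set.mem_Icc, not_and_or] at hy
      rcases hy with h | h
      · have := not_le.1 h; linarith [neg_abs_le y]
      · have := not_le.1 h; linarith [le_abs_self y]
    calc R < |y| := this
      _ = ‖y‖ := rfl
      _ ≤ ‖((τ, y) : ℝ×ℝ)‖ := by simpa using norm_snd_le ((τ, y) : ℝ×ℝ)
  set bound : ℝ → ℝ := (Icc (-R) R).indicator (fun _ => M) with hbound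
  refine continuous_of_dominated (bound := bound) ?_ ?_ ?_ ?_
  · exact fun τ => (((hg.continuous_fderiv one_ne_zero).comp (Continuous.prodMk_right τ)).clm_apply
      continuous_const).aestronglyMeasurable
  · refine fun τ => Eventually.of_forall fun y => ?_
    show ‖fderiv ℝ g (τ, y) (1, 0)‖ ≤ bound y
    by_cases hy : y ∈ Icc (-R) R
    · rw [hbound, indicator_of_mem hy]
      calc ‖fderiv ℝ g (τ, y) (1, 0)‖ ≤ ‖fderiv ℝ g (τ, y)‖ * ‖((1 : ℝ), (0 : ℝ))‖ :=
            ContinuousLinearMap.le_opNorm _ _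
        _ ≤ M * 1 := by
            refine mul_le_mul (hM _) ?_ (norm_nonneg _) (le_trans (norm_nonneg _) (hM (τ, y)))
            rw [Prod.norm_def]; simp
        _ = M := mul_one M
    · rw [hbound, indicator_of_notMem hy, key τ y hy]
      simp
  · exact ((integrableOn_const (C := M) measure_Icc_lt_top.ne).integrable_indicator
      measurableSet_Icc).restrict
  · refine Eventually.of_forall fun y => ?_
    exact ((hg.continuous_fderiv one_ne_zero).comp
      (continuous_id.prodMk continuous_const)).clm_apply continuous_const

private lemma aux_shift_Iio (F : ℝ → ℝ) (a : ℝ) :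
    (∫ y in Iio (0:ℝ), F (y + a)) = ∫ x in Iio a, F x := by
  rw [← integral_indicator measurableSet_Iio, ← integral_indicator measurableSet_Iio]
  have h : ∀ y : ℝ, (Iio (0:ℝ)).indicator (fun y => F (y + a)) y
      = (Iio a).indicator F (y + a) := by
    intro y
    have h2 : (y + a < a) ↔ y < 0 := by constructor <;> intro <;> linarith
    simp [Set.indicator_apply, Set.mem_Iio, h2]
  simp_rw [h]
  exact integral_add_right_eq_self ((Iio a).indicator F) a

private lemma aux_shift_Ioi (F : ℝ → ℝ) (a : ℝ) :
    (∫ y in Ioi (0:ℝ), F (y + a)) = ∫ x in Ioi a, F x := by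
  rw [← integral_indicator measurableSet_Ioi, ← integral_indicator measurableSet_Ioi]
  have h : ∀ y : ℝ, (Ioi (0:ℝ)).indicator (fun y => F (y + a)) y
      = (Ioi a).indicator F (y + a) := by
    intro y
    have h2 : (a < y + a) ↔ 0 < y := by constructor <;> intro <;> linarith
    simp [Set.indicator_apply, Set.mem_Ioi, h2]
  simp_rw [h]
  exact integral_add_right_eq_self ((Ioi a).indicator F) a

private lemma aux_part2 (f : ℝ → ℝ) (hf : ContDiff ℝ 1 f)
    (ul ur : ℝ) (ψl ψr : ℝ) (lam : ℝ)
    (Cl Cr : ℝ) (hCl : Cl = (lam - deriv f ul) * ψl) (hCr : Cr = (lam - deriv f ur) * ψr)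
    (θ : ℝ × ℝ → ℝ) (hθ : ContDiff ℝ (⊤ : ℕ∞) θ) (hθc : HasCompactSupport θ) :
    (∫ t in Ioi (0 : ℝ),
          (ψl * ∫ x in Iio (lam * t),
              (fderiv ℝ θ (t, x) (1, 0) + deriv f ul * fderiv ℝ θ (t, x) (0, 1)))
          + (ψr * ∫ x in Ioi (lam * t),
              (fderiv ℝ θ (t, x) (1, 0) + deriv f ur * fderiv ℝ θ (t, x) (0, 1)))
          + t * (Cr - Cl) *
              (fderiv ℝ θ (t, lam * t) (1, 0) + lam * fderiv ℝ θ (t, lam * t) (0, 1)))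
        + ψl * (∫ x in Iio (0 : ℝ), θ (0, x))
        + ψr * (∫ x in Ioi (0 : ℝ), θ (0, x)) = 0 := by
  have hθ1 : ContDiff ℝ 1 θ := hθ.of_le (by simp)
  obtain ⟨Rθ, hRθ⟩ := hθc.isBounded.subset_closedBall 0
  have hθ0 : ∀ p : ℝ × ℝ, Rθ < ‖p‖ → θ p = 0 := fun p hp => aux_g_zero hRθ hp
  have hθf0 : ∀ p : ℝ × ℝ, Rθ < ‖p‖ → fderiv ℝ θ p = 0 := fun p hp => aux_fderiv_zero hRθ hp
  have hfst : ∀ a b : ℝ, |a| ≤ ‖((a, b) : ℝ × ℝ)‖ := fun a b => by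
    simpa using norm_fst_le ((a, b) : ℝ × ℝ)
  have hsnd : ∀ a b : ℝ, |b| ≤ ‖((a, b) : ℝ × ℝ)‖ := fun a b => by
    simpa using norm_snd_le ((a, b) : ℝ × ℝ)
  have habs : ∀ R x : ℝ, x ∉ Icc (-R) R → R < |x| := by
    intro R x hx
    rw [Set.mem_Icc, not_and_or] at hx
    rcases hx with h | h
    · have := not_le.1 h; linarith [neg_abs_le x]
    · have := not_le.1 h; linarith [le_abs_self x]
  -- the shifted test function
  set A : (ℝ × ℝ) →L[ℝ] (ℝ × ℝ) := (ContinuousLinearMap.fst ℝ ℝ ℝ).prod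
    ((ContinuousLinearMap.snd ℝ ℝ ℝ) + lam • (ContinuousLinearMap.fst ℝ ℝ ℝ)) with hA
  have hAapp : ∀ p : ℝ × ℝ, A p = (p.1, p.2 + lam * p.1) := fun p => rfl
  set η : ℝ × ℝ → ℝ := fun p => θ (p.1, p.2 + lam * p.1) with hη
  have hηA : η = θ ∘ A := funext fun p => by rw [Function.comp_apply, hAapp]
  have hη1 : ContDiff ℝ 1 η := by rw [hηA]; exact hθ1.comp A.contDiff
  have hηc : HasCompactSupport η := by
    set B : ℝ := |lam| * |Rθ| + |Rθ| + 1 with hB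
    apply HasCompactSupport.intro
      (isCompact_Icc.prod isCompact_Icc : IsCompact ((Icc (-Rθ) Rθ) ×ˢ (Icc (-B) B)))
    intro p hp
    rw [Set.mem_prod, not_and_or] at hp
    show θ (p.1, p.2 + lam * p.1) = 0
    by_cases h1 : Rθ < |p.1|
    · exact hθ0 _ (lt_of_lt_of_le h1 (hfst _ _))
    · have hle : |p.1| ≤ Rθ := not_lt.1 h1
      have hp2 : B < |p.2| := by
        rcases hp with h | h
        · exact absurd (Set.mem_Icc.2 (abs_le.1 (le_trans hle (le_abs_self Rθ)))) (by
            intro hmem; exact h (by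
              rcases Set.mem_Icc.1 hmem with ⟨ha, hb⟩
              exact Set.mem_Icc.2 ⟨by linarith [neg_abs_le p.1, hle], by linarith [le_abs_self p.1]⟩))
        · exact habs B p.2 h
      have e1 : |p.2| - |lam * p.1| ≤ |p.2 + lam * p.1| := by
        have h := abs_add_le (p.2 + lam * p.1) (-(lam * p.1))
        simp only [add_neg_cancel_right, abs_neg] at h
        linarith
      have e2 : |lam * p.1| ≤ |lam| * |Rθ| := by
        rw [abs_mul]
        exact mul_le_mul_of_nonneg_left (le_trans hle (le_abs_self Rθ)) (abs_nonneg lam)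
      refine hθ0 _ (lt_of_lt_of_le ?_ (hsnd p.1 (p.2 + lam * p.1)))
      have : Rθ ≤ |Rθ| := le_abs_self Rθ
      linarith
  obtain ⟨Rη, hRη⟩ := hηc.isBounded.subset_closedBall 0
  -- chain rule
  have hηd : ∀ p : ℝ × ℝ, fderiv ℝ η p (1, 0) = fderiv ℝ θ (p.1, p.2 + lam * p.1) (1, lam) := by
    intro p
    have hA10 : A ((1 : ℝ), (0 : ℝ)) = (1, lam) := by rw [hAapp]; norm_num
    rw [hηA, fderiv_comp p (hθ1.differentiable one_ne_zero _) A.differentiableAt,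
      ContinuousLinearMap.fderiv, ContinuousLinearMap.comp_apply, hA10, hAapp]
  have hsplit : ∀ p : ℝ × ℝ,
      fderiv ℝ θ p (1, lam) = fderiv ℝ θ p (1, 0) + lam * fderiv ℝ θ p (0, 1) := by
    intro p
    have hv : ((1 : ℝ), lam) = ((1 : ℝ), (0 : ℝ)) + lam • ((0 : ℝ), (1 : ℝ)) := by
      simp [Prod.ext_iff]
    rw [hv, map_add, (fderiv ℝ θ p).map_smul, smul_eq_mul]
  -- integrability in x
  have hIntv : ∀ (v : ℝ × ℝ) (τ : ℝ), Integrable (fun x => fderiv ℝ θ (τ, x) v) := by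
    intro v τ
    apply Continuous.integrable_of_hasCompactSupport
    · exact ((hθ1.continuous_fderiv one_ne_zero).comp (Continuous.prodMk_right τ)).clm_apply
        continuous_const
    · apply HasCompactSupport.intro (isCompact_Icc : IsCompact (Icc (-Rθ) Rθ))
      intro x hx
      have h0 : fderiv ℝ θ (τ, x) = 0 :=
        hθf0 _ (lt_of_lt_of_le (habs Rθ x hx) (hsnd τ x))
      simp [h0]
  -- FTC in x
  have hw : ∀ τ x : ℝ, HasDerivAt (fun x => θ (τ, x)) (fderiv ℝ θ (τ, x) (0, 1)) x := by
    intro τ x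
    exact ((hθ1.differentiable one_ne_zero (τ, x)).hasFDerivAt).comp_hasDerivAt x
      ((hasDerivAt_const x τ).prodMk (hasDerivAt_id x))
  have hwc : ∀ τ : ℝ, HasCompactSupport (fun x => θ (τ, x)) := by
    intro τ
    apply HasCompactSupport.intro (isCompact_Icc : IsCompact (Icc (-Rθ) Rθ))
    intro x hx
    exact hθ0 _ (lt_of_lt_of_le (habs Rθ x hx) (hsnd τ x))
  have hw1 : ∀ τ : ℝ, ContDiff ℝ 1 (fun x => θ (τ, x)) :=
    fun τ => hθ1.comp (contDiff_const.prodMk contDiff_id)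
  have hderiv_eq : ∀ τ : ℝ, (fun x => fderiv ℝ θ (τ, x) (0, 1)) = deriv (fun x => θ (τ, x)) :=
    fun τ => funext fun x => ((hw τ x).deriv).symm
  have hFTC_Ioi : ∀ τ c : ℝ, (∫ x in Ioi c, fderiv ℝ θ (τ, x) (0, 1)) = - θ (τ, c) := by
    intro τ c
    rw [hderiv_eq τ]
    exact (hwc τ).integral_Ioi_deriv_eq (hw1 τ) c
  have hFTC_Iio : ∀ τ c : ℝ, (∫ x in Iio c, fderiv ℝ θ (τ, x) (0, 1)) = θ (τ, c) := by
    intro τ c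
    have hint := hIntv ((0 : ℝ), (1 : ℝ)) τ
    have hdec := intervalIntegral.integral_Iio_add_Ici (μ := volume) (f := fun x => fderiv ℝ θ (τ, x) (0, 1))
      (b := c) hint.integrableOn hint.integrableOn
    have hIci : (∫ x in Ici c, fderiv ℝ θ (τ, x) (0, 1)) = - θ (τ, c) := by
      rw [integral_Ici_eq_integral_Ioi]; exact hFTC_Ioi τ c
    have htot : (∫ x, fderiv ℝ θ (τ, x) (0, 1)) = 0 := by
      set c' : ℝ := -(|Rθ| + 1) with hc'
      have h1 := hFTC_Ioi τ c'
      have h2 : (∫ x in Iio c', fderiv ℝ θ (τ, x) (0, 1)) = 0 := by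
        rw [setIntegral_congr_fun measurableSet_Iio (g := fun _ => (0 : ℝ)) ?_, integral_zero]
        intro x hx
        have hx' : Rθ < |x| := by
          rw [Set.mem_Iio] at hx
          have h3 : |Rθ| + 1 < -x := by rw [hc'] at hx; linarith
          linarith [neg_le_abs x, le_abs_self Rθ]
        have h0 : fderiv ℝ θ (τ, x) = 0 := hθf0 _ (lt_of_lt_of_le hx' (hsnd τ x))
        simp [h0]
      have hdec' := intervalIntegral.integral_Iio_add_Ici (μ := volume) (f := fun x => fderiv ℝ θ (τ, x) (0, 1))
        (b := c') hint.integrableOn hint.integrableOn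
      have h4 : θ (τ, c') = 0 := by
        refine hθ0 _ (lt_of_lt_of_le ?_ (hsnd τ c'))
        rw [hc', abs_neg, abs_of_pos (by positivity)]
        linarith [le_abs_self Rθ]
      rw [← hdec', h2, integral_Ici_eq_integral_Ioi, h1, h4, zero_add, neg_zero]
    linarith [hdec, hIci, htot]
  -- shift lemmas applied
  have hshiftIio : ∀ τ : ℝ, (∫ y in Iio (0:ℝ), fderiv ℝ η (τ, y) (1, 0))
      = ∫ x in Iio (lam * τ), fderiv ℝ θ (τ, x) (1, lam) := by
    intro τ
    have h : (fun y => fderiv ℝ η (τ, y) (1, 0))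
        = fun y => (fun x => fderiv ℝ θ (τ, x) (1, lam)) (y + lam * τ) := by
      funext y; exact hηd (τ, y)
    rw [h, aux_shift_Iio (fun x => fderiv ℝ θ (τ, x) (1, lam)) (lam * τ)]
  have hshiftIoi : ∀ τ : ℝ, (∫ y in Ioi (0:ℝ), fderiv ℝ η (τ, y) (1, 0))
      = ∫ x in Ioi (lam * τ), fderiv ℝ θ (τ, x) (1, lam) := by
    intro τ
    have h : (fun y => fderiv ℝ η (τ, y) (1, 0))
        = fun y => (fun x => fderiv ℝ θ (τ, x) (1, lam)) (y + lam * τ) := by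
      funext y; exact hηd (τ, y)
    rw [h, aux_shift_Ioi (fun x => fderiv ℝ θ (τ, x) (1, lam)) (lam * τ)]
  -- splitting the integrals
  have hsplitInt : ∀ (s : Set ℝ) (τ c : ℝ),
      (∫ x in s, (fderiv ℝ θ (τ, x) (1, 0) + c * fderiv ℝ θ (τ, x) (0, 1)))
      = (∫ x in s, fderiv ℝ θ (τ, x) (1, 0)) + c * ∫ x in s, fderiv ℝ θ (τ, x) (0, 1) := by
    intro s τ c
    rw [integral_add ((hIntv _ τ).integrableOn)
      (((hIntv ((0:ℝ),(1:ℝ)) τ).integrableOn).const_mul c), integral_const_mul]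
  have hsplitlam : ∀ (s : Set ℝ) (τ : ℝ),
      (∫ x in s, fderiv ℝ θ (τ, x) (1, lam))
      = (∫ x in s, fderiv ℝ θ (τ, x) (1, 0)) + lam * ∫ x in s, fderiv ℝ θ (τ, x) (0, 1) := by
    intro s τ
    have h : (fun x => fderiv ℝ θ (τ, x) (1, lam))
        = fun x => fderiv ℝ θ (τ, x) (1, 0) + lam * fderiv ℝ θ (τ, x) (0, 1) :=
      funext fun x => hsplit (τ, x)
    rw [h, hsplitInt s τ lam]
  -- derivative of the diagonal part
  have hg0' : ∀ τ : ℝ, HasDerivAt (fun τ => θ (τ, lam * τ))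
      (fderiv ℝ θ (τ, lam * τ) (1, lam)) τ := by
    intro τ
    have hcurve : HasDerivAt (fun τ : ℝ => ((τ, lam * τ) : ℝ × ℝ)) ((1 : ℝ), lam) τ :=
      (hasDerivAt_id τ).prodMk (by simpa using (hasDerivAt_id τ).const_mul lam)
    have := ((hθ1.differentiable one_ne_zero (τ, lam * τ)).hasFDerivAt).comp_hasDerivAt τ hcurve
    simpa [Function.comp_def] using this
  -- the primitive G and its derivative S
  set G : ℝ → ℝ := fun τ => ψl * (∫ y in Iio (0:ℝ), η (τ, y)) + ψr * (∫ y in Ioi (0:ℝ), η (τ, y))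
    + (Cr - Cl) * (τ * θ (τ, lam * τ)) with hG
  set S : ℝ → ℝ := fun τ => ψl * (∫ y in Iio (0:ℝ), fderiv ℝ η (τ, y) (1, 0))
    + ψr * (∫ y in Ioi (0:ℝ), fderiv ℝ η (τ, y) (1, 0))
    + (Cr - Cl) * (1 * θ (τ, lam * τ) + τ * fderiv ℝ θ (τ, lam * τ) (1, lam)) with hS
  have hGS : ∀ τ : ℝ, HasDerivAt G (S τ) τ := by
    intro τ
    have h1 := (aux_hasDerivAt_param η hη1 hηc (Iio 0) τ).const_mul ψl
    have h2 := (aux_hasDerivAt_param η hη1 hηc (Ioi 0) τ).const_mul ψr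
    have h3 := ((hasDerivAt_id τ).mul (hg0' τ)).const_mul (Cr - Cl)
    exact (h1.add h2).add h3
  have hScont : Continuous S := by
    rw [hS]
    have hθdiag : Continuous fun τ : ℝ => θ (τ, lam * τ) :=
      hθ1.continuous.comp (continuous_id.prodMk (continuous_const.mul continuous_id))
    have hfdiag : Continuous fun τ : ℝ => fderiv ℝ θ (τ, lam * τ) (1, lam) :=
      ((hθ1.continuous_fderiv one_ne_zero).comp
        (continuous_id.prodMk (continuous_const.mul continuous_id))).clm_apply continuous_const
    exact ((continuous_const.mul (aux_cont_param η hη1 hηc (Iio 0))).add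
      (continuous_const.mul (aux_cont_param η hη1 hηc (Ioi 0)))).add
      (continuous_const.mul (((continuous_const.mul hθdiag)).add
        (continuous_id.mul hfdiag)))
  have hηzero : ∀ p : ℝ × ℝ, Rη < ‖p‖ → η p = 0 := fun p hp => aux_g_zero hRη hp
  have hηf0 : ∀ p : ℝ × ℝ, Rη < ‖p‖ → fderiv ℝ η p = 0 := fun p hp => aux_fderiv_zero hRη hp
  set RS : ℝ := |Rθ| + |Rη| + 1 with hRS
  have hbig : ∀ τ : ℝ, RS < |τ| → S τ = 0 ∧ G τ = 0 := by
    intro τ hτ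
    have hτθ : Rθ < |τ| := by
      rw [hRS] at hτ; linarith [le_abs_self Rθ, abs_nonneg Rη]
    have hτη : Rη < |τ| := by
      rw [hRS] at hτ; linarith [le_abs_self Rη, abs_nonneg Rθ]
    have h1 : ∀ y : ℝ, fderiv ℝ η (τ, y) = 0 := fun y => hηf0 _ (lt_of_lt_of_le hτη (hfst τ y))
    have h1' : ∀ y : ℝ, η (τ, y) = 0 := fun y => hηzero _ (lt_of_lt_of_le hτη (hfst τ y))
    have h2 : θ (τ, lam * τ) = 0 := hθ0 _ (lt_of_lt_of_le hτθ (hfst τ (lam * τ)))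
    have h3 : fderiv ℝ θ (τ, lam * τ) = 0 := hθf0 _ (lt_of_lt_of_le hτθ (hfst τ (lam * τ)))
    constructor
    · rw [hS]; simp [h1, h2, h3]
    · rw [hG]; simp [h1', h2]
  have hSsupp : HasCompactSupport S :=
    HasCompactSupport.intro (isCompact_Icc : IsCompact (Icc (-RS) RS))
      fun τ hτ => (hbig τ (habs RS τ hτ)).1
  have hGtop : Filter.Tendsto G Filter.atTop (nhds 0) := by
    have heq : G =ᶠ[Filter.atTop] fun _ => (0:ℝ) := by
      filter_upwards [Filter.eventually_gt_atTop RS] with τ hτ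
      refine (hbig τ ?_).2
      have hRSpos : (0:ℝ) < RS := by rw [hRS]; positivity
      rw [abs_of_pos (lt_trans hRSpos hτ)]; exact hτ
    exact Filter.Tendsto.congr' heq.symm tendsto_const_nhds
  have hFTCt : (∫ τ in Ioi (0:ℝ), S τ) = 0 - G 0 :=
    integral_Ioi_of_hasDerivAt_of_tendsto ((hGS 0).continuousAt.continuousWithinAt)
      (fun x _ => hGS x) ((hScont.integrable_of_hasCompactSupport hSsupp).integrableOn) hGtop
  have hTS : ∀ τ : ℝ,
      (ψl * ∫ x in Iio (lam * τ),
          (fderiv ℝ θ (τ, x) (1, 0) + deriv f ul * fderiv ℝ θ (τ, x) (0, 1)))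
      + (ψr * ∫ x in Ioi (lam * τ),
          (fderiv ℝ θ (τ, x) (1, 0) + deriv f ur * fderiv ℝ θ (τ, x) (0, 1)))
      + τ * (Cr - Cl) *
          (fderiv ℝ θ (τ, lam * τ) (1, 0) + lam * fderiv ℝ θ (τ, lam * τ) (0, 1)) = S τ := by
    intro τ
    rw [hS]
    simp only
    rw [hshiftIio τ, hshiftIoi τ, hsplitlam (Iio (lam * τ)) τ, hsplitlam (Ioi (lam * τ)) τ,
      hsplitInt (Iio (lam * τ)) τ (deriv f ul), hsplitInt (Ioi (lam * τ)) τ (deriv f ur),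
      hFTC_Iio τ (lam * τ), hFTC_Ioi τ (lam * τ), hsplit (τ, lam * τ), hCl, hCr]
    ring
  have hmain : (∫ t in Ioi (0 : ℝ),
          (ψl * ∫ x in Iio (lam * t),
              (fderiv ℝ θ (t, x) (1, 0) + deriv f ul * fderiv ℝ θ (t, x) (0, 1)))
          + (ψr * ∫ x in Ioi (lam * t),
              (fderiv ℝ θ (t, x) (1, 0) + deriv f ur * fderiv ℝ θ (t, x) (0, 1)))
          + t * (Cr - Cl) *
              (fderiv ℝ θ (t, lam * t) (1, 0) + lam * fderiv ℝ θ (t, lam * t) (0, 1)))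
      = 0 - G 0 := by
    rw [← hFTCt]
    exact integral_congr_ae (Filter.Eventually.of_forall hTS)
  rw [hmain]
  have hFl0 : (∫ y in Iio (0:ℝ), η (0, y)) = ∫ x in Iio (0:ℝ), θ (0, x) := by
    rw [hη]; simp
  have hFr0 : (∫ y in Ioi (0:ℝ), η (0, y)) = ∫ x in Ioi (0:ℝ), θ (0, x) := by
    rw [hη]; simp
  simp only [hG]
  rw [hFl0, hFr0]
  ring



/-- **Riemann problem, shock case, for the linearized equation.**
Along the shock-wave solution `u` of `∂ₜu + ∂ₓ f(u) = 0` with left/right states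
`u_l ≠ u_r` and Rankine–Hugoniot speed `λ`, the family of measures
`ψ(t) = ψ_l·Leb⌊(−∞,λt) + ψ_r·Leb⌊(λt,∞) + t(C_r − C_l)·δ_{λt}` is a measure-valued
weak solution of `∂ₜψ + ∂ₓ(\widehat{f'}(u) ψ) = 0`, where the Volpert value of the
coefficient on the shock line is `∫₀¹ f'(u_l + s(u_r − u_l)) ds = λ`. -/
theorem stmt_1 (f : ℝ → ℝ) (hf : ContDiff ℝ 1 f)
    (ul ur : ℝ) (hne : ul ≠ ur) (ψl ψr : ℝ)
    (lam : ℝ) (hlam : lam = (f ur - f ul) / (ur - ul))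
    (Cl Cr : ℝ) (hCl : Cl = (lam - deriv f ul) * ψl) (hCr : Cr = (lam - deriv f ur) * ψr) :
    (∫ s in (0:ℝ)..1, deriv f (ul + s * (ur - ul))) = lam ∧
    ∀ θ : ℝ × ℝ → ℝ, ContDiff ℝ (⊤ : ℕ∞) θ → HasCompactSupport θ →
      (∫ t in Ioi (0 : ℝ),
          (ψl * ∫ x in Iio (lam * t),
              (fderiv ℝ θ (t, x) (1, 0) + deriv f ul * fderiv ℝ θ (t, x) (0, 1)))
          + (ψr * ∫ x in Ioi (lam * t),
              (fderiv ℝ θ (t, x) (1, 0) + deriv f ur * fderiv ℝ θ (t, x) (0, 1)))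
          + t * (Cr - Cl) *
              (fderiv ℝ θ (t, lam * t) (1, 0) + lam * fderiv ℝ θ (t, lam * t) (0, 1)))
        + ψl * (∫ x in Iio (0 : ℝ), θ (0, x))
        + ψr * (∫ x in Ioi (0 : ℝ), θ (0, x)) = 0 := by
  constructor
  · -- the Volpert average equals the Rankine–Hugoniot speed
    have hd : ur - ul ≠ 0 := sub_ne_zero.2 (Ne.symm hne)
    have hder : ∀ s : ℝ, HasDerivAt (fun s => f (ul + s * (ur - ul)) / (ur - ul))
        (deriv f (ul + s * (ur - ul))) s := by
      intro s
      have h1 : HasDerivAt (fun s : ℝ => ul + s * (ur - ul)) (ur - ul) s := by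
        simpa using (hasDerivAt_mul_const (c := ur - ul) (x := s)).const_add ul
      have h2 := ((hf.differentiable one_ne_zero _).hasDerivAt).comp s h1
      have h3 := h2.div_const (ur - ul)
      simpa [mul_div_assoc, mul_div_cancel_right₀ _ hd] using h3
    rw [intervalIntegral.integral_eq_sub_of_hasDerivAt (fun s _ => hder s) ?_]
    · rw [hlam]; field_simp; simp
    · apply Continuous.intervalIntegrable
      exact (hf.continuous_deriv le_rfl).comp (by continuity)
  · exact fun θ hθ hθc => aux_part2 f hf ul ur ψl ψr lam Cl Cr hCl hCr θ hθ hθc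
end

section
/- Let f : ℝ → ℝ be continuously differentiable, let u_l ≠ u_r be two states with Rankine–Hugoniot speed λ := (f(u_r) − f(u_l))/(u_r − u_l), let ψ_l, ψ_r ∈ ℝ, and set C_l := (λ − f'(u_l)) ψ_l and C_r := (λ − f'(u_r)) ψ_r. If the compatibility condition C_l = C_r holds, then the bounded variation function ψ(t,x) = ψ_l for x < λt and ψ(t,x) = ψ_r for x > λt (containing no Dirac mass) is a weak solution of the linearized equation: for every test function θ ∈ C_c^∞(ℝ × ℝ), ∫_0^∞ [ ψ_l ∫_{−∞}^{λt} ( ∂_t θ + f'(u_l) ∂_x θ ) dx + ψ_r ∫_{λt}^{∞} ( ∂_t θ + f'(u_r) ∂_x θ ) dx ] dt + ψ_l ∫_{−∞}^0 θ(0,x) dx + ψ_r ∫_0^∞ θ(0,x) dx = 0. -/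
open MeasureTheory Set Filter Function

/-! ### Auxiliary lemmas -/

/-- The shear homeomorphism `(t, y) ↦ (t, c t + y)` of the plane. -/
def shearHomeo (c : ℝ) : (ℝ × ℝ) ≃ₜ (ℝ × ℝ) where
  toFun p := (p.1, c * p.1 + p.2)
  invFun p := (p.1, p.2 - c * p.1)
  left_inv p := by simp
  right_inv p := by simp
  continuous_toFun := by fun_prop
  continuous_invFun := by fun_prop

lemma sliceT_hcs {h : ℝ × ℝ → ℝ} (hs : HasCompactSupport h) (y : ℝ) :
    HasCompactSupport (fun t => h (t, y)) := by
  apply HasCompactSupport.intro (hs.image continuous_fst)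
  intro t ht
  by_contra h0
  exact ht (mem_image_of_mem _ (subset_tsupport _ h0))

lemma sliceY_hcs {h : ℝ × ℝ → ℝ} (hs : HasCompactSupport h) (t : ℝ) :
    HasCompactSupport (fun y => h (t, y)) := by
  apply HasCompactSupport.intro (hs.image continuous_snd)
  intro y hy
  by_contra h0
  exact hy (mem_image_of_mem _ (subset_tsupport _ h0))

lemma cs_tendsto_atTop {p : ℝ → ℝ} (hp : HasCompactSupport p) :
    Tendsto p atTop (nhds 0) := by
  rw [hasCompactSupport_iff_eventuallyEq, Filter.coclosedCompact_eq_cocompact] at hp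
  exact hp.filter_mono atTop_le_cocompact |>.tendsto

lemma cs_tendsto_atBot {p : ℝ → ℝ} (hp : HasCompactSupport p) :
    Tendsto p atBot (nhds 0) := by
  rw [hasCompactSupport_iff_eventuallyEq, Filter.coclosedCompact_eq_cocompact] at hp
  exact hp.filter_mono atBot_le_cocompact |>.tendsto

lemma ftc_Iio {p q : ℝ → ℝ} (hp : HasCompactSupport p)
    (hd : ∀ y, HasDerivAt p (q y) y) (hqi : Integrable q) :
    ∫ y in Iio (0:ℝ), q y = p 0 := by
  rw [← integral_Iic_eq_integral_Iio,
    integral_Iic_of_hasDerivAt_of_tendsto' (fun x _ => hd x) hqi.integrableOn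
      (cs_tendsto_atBot hp), sub_zero]

lemma ftc_Ioi {p q : ℝ → ℝ} (hp : HasCompactSupport p)
    (hd : ∀ y, HasDerivAt p (q y) y) (hqi : Integrable q) :
    ∫ y in Ioi (0:ℝ), q y = - p 0 := by
  rw [integral_Ioi_of_hasDerivAt_of_tendsto' (fun x _ => hd x) hqi.integrableOn
      (cs_tendsto_atTop hp), zero_sub]

lemma shift_Iio (F : ℝ → ℝ) (c : ℝ) :
    ∫ y in Iio (0:ℝ), F (c + y) = ∫ x in Iio c, F x := by
  rw [← integral_indicator measurableSet_Iio, ← integral_indicator measurableSet_Iio,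
    ← integral_add_left_eq_self ((Iio c).indicator F) c]
  congr 1 with y
  simp only [indicator_apply, mem_Iio]
  by_cases hy : y < 0
  · rw [if_pos hy, if_pos (by linarith)]
  · rw [if_neg hy, if_neg (fun h => hy (by linarith))]

lemma shift_Ioi (F : ℝ → ℝ) (c : ℝ) :
    ∫ y in Ioi (0:ℝ), F (c + y) = ∫ x in Ioi c, F x := by
  rw [← integral_indicator measurableSet_Ioi, ← integral_indicator measurableSet_Ioi,
    ← integral_add_left_eq_self ((Ioi c).indicator F) c]
  congr 1 with y
  simp only [indicator_apply, mem_Ioi]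
  by_cases hy : 0 < y
  · rw [if_pos hy, if_pos (by linarith)]
  · rw [if_neg hy, if_neg (fun h => hy (by linarith))]

lemma core_l (g : ℝ × ℝ → ℝ) (hg : ContDiff ℝ (⊤ : ℕ∞) g) (hgs : HasCompactSupport g) (c : ℝ) :
    (∫ t in Ioi (0:ℝ), ∫ y in Iio (0:ℝ),
        (fderiv ℝ g (t, y) (1, 0) + c * fderiv ℝ g (t, y) (0, 1)))
      = c * (∫ t in Ioi (0:ℝ), g (t, 0)) - ∫ y in Iio (0:ℝ), g (0, y) := by
  have hgd := hg.differentiable (by simp)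
  have hDtc : Continuous (fun p : ℝ × ℝ => fderiv ℝ g p (1, 0)) :=
    (hg.continuous_fderiv (by simp)).clm_apply continuous_const
  have hDyc : Continuous (fun p : ℝ × ℝ => fderiv ℝ g p (0, 1)) :=
    (hg.continuous_fderiv (by simp)).clm_apply continuous_const
  have hDts : HasCompactSupport (fun p : ℝ × ℝ => fderiv ℝ g p (1, 0)) :=
    hgs.fderiv_apply ℝ (1, 0)
  have hDys : HasCompactSupport (fun p : ℝ × ℝ => fderiv ℝ g p (0, 1)) :=
    hgs.fderiv_apply ℝ (0, 1)
  have hDti : Integrable (fun p : ℝ × ℝ => fderiv ℝ g p (1, 0)) :=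
    hDtc.integrable_of_hasCompactSupport hDts
  have hdY : ∀ t y : ℝ, HasDerivAt (fun z => g (t, z)) (fderiv ℝ g (t, y) (0, 1)) y :=
    fun t y => ((hgd (t, y)).hasFDerivAt).comp_hasDerivAt y
      ((hasDerivAt_const y t).prodMk (hasDerivAt_id y))
  have hdT : ∀ y t : ℝ, HasDerivAt (fun s => g (s, y)) (fderiv ℝ g (t, y) (1, 0)) t :=
    fun y t => ((hgd (t, y)).hasFDerivAt).comp_hasDerivAt t
      ((hasDerivAt_id t).prodMk (hasDerivAt_const t y))
  have hsliceY : ∀ t : ℝ, Integrable (fun y => fderiv ℝ g (t, y) (0, 1)) := fun t =>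
    (hDyc.comp (continuous_const.prodMk continuous_id)).integrable_of_hasCompactSupport
      (sliceY_hcs hDys t)
  have hsliceYt : ∀ t : ℝ, Integrable (fun y => fderiv ℝ g (t, y) (1, 0)) := fun t =>
    (hDtc.comp (continuous_const.prodMk continuous_id)).integrable_of_hasCompactSupport
      (sliceY_hcs hDts t)
  have hsliceT : ∀ y : ℝ, Integrable (fun t => fderiv ℝ g (t, y) (1, 0)) := fun y =>
    (hDtc.comp (continuous_id.prodMk continuous_const)).integrable_of_hasCompactSupport
      (sliceT_hcs hDts y)
  have hinner : ∀ t : ℝ,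
      (∫ y in Iio (0:ℝ), (fderiv ℝ g (t, y) (1, 0) + c * fderiv ℝ g (t, y) (0, 1)))
        = (∫ y in Iio (0:ℝ), fderiv ℝ g (t, y) (1, 0)) + c * g (t, 0) := by
    intro t
    rw [integral_add (hsliceYt t).integrableOn (((hsliceY t).const_mul c).integrableOn),
      integral_const_mul, ftc_Iio (sliceY_hcs hgs t) (hdY t) (hsliceY t)]
  have hI2 : Integrable (fun t => g (t, 0)) :=
    ((hg.continuous).comp (continuous_id.prodMk continuous_const)).integrable_of_hasCompactSupport
      (sliceT_hcs hgs 0)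
  have hprod : Integrable (fun p : ℝ × ℝ => fderiv ℝ g p (1, 0))
      ((volume.restrict (Ioi (0:ℝ))).prod (volume.restrict (Iio (0:ℝ)))) := by
    rw [Measure.prod_restrict]
    exact ((Measure.volume_eq_prod ℝ ℝ) ▸ hDti).restrict
  have hI1 : Integrable (fun t => ∫ y in Iio (0:ℝ), fderiv ℝ g (t, y) (1, 0))
      (volume.restrict (Ioi (0:ℝ))) := hprod.integral_prod_left
  calc (∫ t in Ioi (0:ℝ), ∫ y in Iio (0:ℝ),
        (fderiv ℝ g (t, y) (1, 0) + c * fderiv ℝ g (t, y) (0, 1)))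
      = ∫ t in Ioi (0:ℝ),
          ((∫ y in Iio (0:ℝ), fderiv ℝ g (t, y) (1, 0)) + c * g (t, 0)) :=
        integral_congr_ae (Filter.Eventually.of_forall hinner)
    _ = (∫ t in Ioi (0:ℝ), ∫ y in Iio (0:ℝ), fderiv ℝ g (t, y) (1, 0))
          + c * ∫ t in Ioi (0:ℝ), g (t, 0) := by
        rw [integral_add hI1 ((hI2.const_mul c).integrableOn), integral_const_mul]
    _ = (∫ y in Iio (0:ℝ), ∫ t in Ioi (0:ℝ), fderiv ℝ g (t, y) (1, 0))
          + c * ∫ t in Ioi (0:ℝ), g (t, 0) := by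
        rw [integral_integral_swap_of_hasCompactSupport (f := fun t y => fderiv ℝ g (t, y) (1, 0)) hDtc hDts]
    _ = (∫ y in Iio (0:ℝ), -g (0, y)) + c * ∫ t in Ioi (0:ℝ), g (t, 0) := by
        congr 1
        refine integral_congr_ae (Filter.Eventually.of_forall fun y => ?_)
        exact ftc_Ioi (sliceT_hcs hgs y) (fun t => hdT y t) (hsliceT y)
    _ = c * (∫ t in Ioi (0:ℝ), g (t, 0)) - ∫ y in Iio (0:ℝ), g (0, y) := by
        rw [integral_neg]; ring

lemma core_r (g : ℝ × ℝ → ℝ) (hg : ContDiff ℝ (⊤ : ℕ∞) g) (hgs : HasCompactSupport g) (c : ℝ) :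
    (∫ t in Ioi (0:ℝ), ∫ y in Ioi (0:ℝ),
        (fderiv ℝ g (t, y) (1, 0) + c * fderiv ℝ g (t, y) (0, 1)))
      = -c * (∫ t in Ioi (0:ℝ), g (t, 0)) - ∫ y in Ioi (0:ℝ), g (0, y) := by
  have hgd := hg.differentiable (by simp)
  have hDtc : Continuous (fun p : ℝ × ℝ => fderiv ℝ g p (1, 0)) :=
    (hg.continuous_fderiv (by simp)).clm_apply continuous_const
  have hDyc : Continuous (fun p : ℝ × ℝ => fderiv ℝ g p (0, 1)) :=
    (hg.continuous_fderiv (by simp)).clm_apply continuous_const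
  have hDts : HasCompactSupport (fun p : ℝ × ℝ => fderiv ℝ g p (1, 0)) :=
    hgs.fderiv_apply ℝ (1, 0)
  have hDys : HasCompactSupport (fun p : ℝ × ℝ => fderiv ℝ g p (0, 1)) :=
    hgs.fderiv_apply ℝ (0, 1)
  have hDti : Integrable (fun p : ℝ × ℝ => fderiv ℝ g p (1, 0)) :=
    hDtc.integrable_of_hasCompactSupport hDts
  have hdY : ∀ t y : ℝ, HasDerivAt (fun z => g (t, z)) (fderiv ℝ g (t, y) (0, 1)) y :=
    fun t y => ((hgd (t, y)).hasFDerivAt).comp_hasDerivAt y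
      ((hasDerivAt_const y t).prodMk (hasDerivAt_id y))
  have hdT : ∀ y t : ℝ, HasDerivAt (fun s => g (s, y)) (fderiv ℝ g (t, y) (1, 0)) t :=
    fun y t => ((hgd (t, y)).hasFDerivAt).comp_hasDerivAt t
      ((hasDerivAt_id t).prodMk (hasDerivAt_const t y))
  have hsliceY : ∀ t : ℝ, Integrable (fun y => fderiv ℝ g (t, y) (0, 1)) := fun t =>
    (hDyc.comp (continuous_const.prodMk continuous_id)).integrable_of_hasCompactSupport
      (sliceY_hcs hDys t)
  have hsliceYt : ∀ t : ℝ, Integrable (fun y => fderiv ℝ g (t, y) (1, 0)) := fun t =>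
    (hDtc.comp (continuous_const.prodMk continuous_id)).integrable_of_hasCompactSupport
      (sliceY_hcs hDts t)
  have hsliceT : ∀ y : ℝ, Integrable (fun t => fderiv ℝ g (t, y) (1, 0)) := fun y =>
    (hDtc.comp (continuous_id.prodMk continuous_const)).integrable_of_hasCompactSupport
      (sliceT_hcs hDts y)
  have hinner : ∀ t : ℝ,
      (∫ y in Ioi (0:ℝ), (fderiv ℝ g (t, y) (1, 0) + c * fderiv ℝ g (t, y) (0, 1)))
        = (∫ y in Ioi (0:ℝ), fderiv ℝ g (t, y) (1, 0)) + c * (-g (t, 0)) := by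
    intro t
    rw [integral_add (hsliceYt t).integrableOn (((hsliceY t).const_mul c).integrableOn),
      integral_const_mul, ftc_Ioi (sliceY_hcs hgs t) (hdY t) (hsliceY t)]
  have hI2 : Integrable (fun t => -g (t, 0)) :=
    (((hg.continuous).comp
      (continuous_id.prodMk continuous_const)).integrable_of_hasCompactSupport
      (sliceT_hcs hgs 0)).neg
  have hprod : Integrable (fun p : ℝ × ℝ => fderiv ℝ g p (1, 0))
      ((volume.restrict (Ioi (0:ℝ))).prod (volume.restrict (Ioi (0:ℝ)))) := by
    rw [Measure.prod_restrict]
    exact ((Measure.volume_eq_prod ℝ ℝ) ▸ hDti).restrict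
  have hI1 : Integrable (fun t => ∫ y in Ioi (0:ℝ), fderiv ℝ g (t, y) (1, 0))
      (volume.restrict (Ioi (0:ℝ))) := hprod.integral_prod_left
  calc (∫ t in Ioi (0:ℝ), ∫ y in Ioi (0:ℝ),
        (fderiv ℝ g (t, y) (1, 0) + c * fderiv ℝ g (t, y) (0, 1)))
      = ∫ t in Ioi (0:ℝ),
          ((∫ y in Ioi (0:ℝ), fderiv ℝ g (t, y) (1, 0)) + c * (-g (t, 0))) :=
        integral_congr_ae (Filter.Eventually.of_forall hinner)
    _ = (∫ t in Ioi (0:ℝ), ∫ y in Ioi (0:ℝ), fderiv ℝ g (t, y) (1, 0))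
          + c * ∫ t in Ioi (0:ℝ), -g (t, 0) := by
        rw [integral_add hI1 ((hI2.const_mul c).integrableOn), integral_const_mul]
    _ = (∫ y in Ioi (0:ℝ), ∫ t in Ioi (0:ℝ), fderiv ℝ g (t, y) (1, 0))
          + c * ∫ t in Ioi (0:ℝ), -g (t, 0) := by
        rw [integral_integral_swap_of_hasCompactSupport (f := fun t y => fderiv ℝ g (t, y) (1, 0)) hDtc hDts]
    _ = (∫ y in Ioi (0:ℝ), -g (0, y)) + c * ∫ t in Ioi (0:ℝ), -g (t, 0) := by
        congr 1
        refine integral_congr_ae (Filter.Eventually.of_forall fun y => ?_)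
        exact ftc_Ioi (sliceT_hcs hgs y) (fun t => hdT y t) (hsliceT y)
    _ = -c * (∫ t in Ioi (0:ℝ), g (t, 0)) - ∫ y in Ioi (0:ℝ), g (0, y) := by
        rw [integral_neg, integral_neg]; ring

lemma shear_contDiff {θ : ℝ × ℝ → ℝ} (hθ : ContDiff ℝ (⊤ : ℕ∞) θ) (lam : ℝ) :
    ContDiff ℝ (⊤ : ℕ∞) (fun p : ℝ × ℝ => θ (p.1, lam * p.1 + p.2)) :=
  hθ.comp (contDiff_fst.prodMk ((contDiff_const.mul contDiff_fst).add contDiff_snd))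

lemma shear_hcs {θ : ℝ × ℝ → ℝ} (hθs : HasCompactSupport θ) (lam : ℝ) :
    HasCompactSupport (fun p : ℝ × ℝ => θ (p.1, lam * p.1 + p.2)) := by
  have : (fun p : ℝ × ℝ => θ (p.1, lam * p.1 + p.2)) = θ ∘ (shearHomeo lam) := rfl
  rw [this]
  exact hθs.comp_homeomorph _

lemma shear_fderiv {θ : ℝ × ℝ → ℝ} (hθ : ContDiff ℝ (⊤ : ℕ∞) θ) (lam : ℝ) :
    ∀ p : ℝ × ℝ,
      (fderiv ℝ (fun p : ℝ × ℝ => θ (p.1, lam * p.1 + p.2)) p (1, 0)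
        = fderiv ℝ θ (p.1, lam * p.1 + p.2) (1, 0)
          + lam * fderiv ℝ θ (p.1, lam * p.1 + p.2) (0, 1))
      ∧ (fderiv ℝ (fun p : ℝ × ℝ => θ (p.1, lam * p.1 + p.2)) p (0, 1)
        = fderiv ℝ θ (p.1, lam * p.1 + p.2) (0, 1)) := by
  have hLc : ∀ p : ℝ × ℝ,
      ((ContinuousLinearMap.fst ℝ ℝ ℝ).prod
        (lam • ContinuousLinearMap.fst ℝ ℝ ℝ + ContinuousLinearMap.snd ℝ ℝ ℝ)) p
        = (p.1, lam * p.1 + p.2) := by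
    intro p
    simp [ContinuousLinearMap.prod_apply, smul_eq_mul]
  set Lc := (ContinuousLinearMap.fst ℝ ℝ ℝ).prod
      (lam • ContinuousLinearMap.fst ℝ ℝ ℝ + ContinuousLinearMap.snd ℝ ℝ ℝ) with hLc_def
  have hgeq : (fun p : ℝ × ℝ => θ (p.1, lam * p.1 + p.2)) = θ ∘ Lc := by
    funext p
    rw [Function.comp_apply, hLc p]
  intro p
  have h1 : HasFDerivAt θ (fderiv ℝ θ (Lc p)) (Lc p) :=
    (hθ.differentiable (by simp) (Lc p)).hasFDerivAt
  have h2 := h1.comp p Lc.hasFDerivAt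
  rw [← hgeq, hLc p] at h2
  have hfd := h2.fderiv
  constructor
  · rw [hfd, ContinuousLinearMap.comp_apply]
    have hv : Lc ((1:ℝ), (0:ℝ)) = ((1:ℝ), lam) := by rw [hLc]; norm_num
    rw [hv, show ((1:ℝ), lam) = ((1:ℝ), (0:ℝ)) + lam • ((0:ℝ), (1:ℝ)) by
      simp [Prod.ext_iff], ContinuousLinearMap.map_add, ContinuousLinearMap.map_smul,
      smul_eq_mul]
  · rw [hfd, ContinuousLinearMap.comp_apply]
    congr 1
    rw [hLc]
    norm_num

lemma side_inner_l {θ : ℝ × ℝ → ℝ} (hθ : ContDiff ℝ (⊤ : ℕ∞) θ) (lam a : ℝ) :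
    ∀ t : ℝ, (∫ x in Iio (lam * t), (fderiv ℝ θ (t, x) (1, 0) + a * fderiv ℝ θ (t, x) (0, 1)))
      = ∫ y in Iio (0:ℝ),
          (fderiv ℝ (fun p : ℝ × ℝ => θ (p.1, lam * p.1 + p.2)) (t, y) (1, 0)
            + (a - lam) * fderiv ℝ (fun p : ℝ × ℝ => θ (p.1, lam * p.1 + p.2)) (t, y) (0, 1)) := by
  intro t
  rw [← shift_Iio (fun x => fderiv ℝ θ (t, x) (1, 0) + a * fderiv ℝ θ (t, x) (0, 1)) (lam * t)]
  refine integral_congr_ae (Filter.Eventually.of_forall fun y => ?_)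
  have h := shear_fderiv hθ lam (t, y)
  dsimp only
  rw [h.1, h.2]
  ring

lemma side_inner_r {θ : ℝ × ℝ → ℝ} (hθ : ContDiff ℝ (⊤ : ℕ∞) θ) (lam a : ℝ) :
    ∀ t : ℝ, (∫ x in Ioi (lam * t), (fderiv ℝ θ (t, x) (1, 0) + a * fderiv ℝ θ (t, x) (0, 1)))
      = ∫ y in Ioi (0:ℝ),
          (fderiv ℝ (fun p : ℝ × ℝ => θ (p.1, lam * p.1 + p.2)) (t, y) (1, 0)
            + (a - lam) * fderiv ℝ (fun p : ℝ × ℝ => θ (p.1, lam * p.1 + p.2)) (t, y) (0, 1)) := by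
  intro t
  rw [← shift_Ioi (fun x => fderiv ℝ θ (t, x) (1, 0) + a * fderiv ℝ θ (t, x) (0, 1)) (lam * t)]
  refine integral_congr_ae (Filter.Eventually.of_forall fun y => ?_)
  have h := shear_fderiv hθ lam (t, y)
  dsimp only
  rw [h.1, h.2]
  ring

lemma side_l {θ : ℝ × ℝ → ℝ} (hθ : ContDiff ℝ (⊤ : ℕ∞) θ) (hθs : HasCompactSupport θ) (lam a : ℝ) :
    (∫ t in Ioi (0:ℝ), ∫ x in Iio (lam * t),
        (fderiv ℝ θ (t, x) (1, 0) + a * fderiv ℝ θ (t, x) (0, 1)))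
      = (a - lam) * (∫ t in Ioi (0:ℝ), θ (t, lam * t)) - ∫ x in Iio (0:ℝ), θ (0, x) := by
  have h := core_l _ (shear_contDiff hθ lam) (shear_hcs hθs lam) (a - lam)
  calc (∫ t in Ioi (0:ℝ), ∫ x in Iio (lam * t),
        (fderiv ℝ θ (t, x) (1, 0) + a * fderiv ℝ θ (t, x) (0, 1)))
      = ∫ t in Ioi (0:ℝ), ∫ y in Iio (0:ℝ),
          (fderiv ℝ (fun p : ℝ × ℝ => θ (p.1, lam * p.1 + p.2)) (t, y) (1, 0)
            + (a - lam) * fderiv ℝ (fun p : ℝ × ℝ => θ (p.1, lam * p.1 + p.2)) (t, y) (0, 1)) :=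
        integral_congr_ae (Filter.Eventually.of_forall (side_inner_l hθ lam a))
    _ = (a - lam) * (∫ t in Ioi (0:ℝ), θ (t, lam * t + 0))
          - ∫ y in Iio (0:ℝ), θ (0, lam * 0 + y) := h
    _ = (a - lam) * (∫ t in Ioi (0:ℝ), θ (t, lam * t)) - ∫ x in Iio (0:ℝ), θ (0, x) := by
        norm_num

lemma side_r {θ : ℝ × ℝ → ℝ} (hθ : ContDiff ℝ (⊤ : ℕ∞) θ) (hθs : HasCompactSupport θ) (lam a : ℝ) :
    (∫ t in Ioi (0:ℝ), ∫ x in Ioi (lam * t),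
        (fderiv ℝ θ (t, x) (1, 0) + a * fderiv ℝ θ (t, x) (0, 1)))
      = -(a - lam) * (∫ t in Ioi (0:ℝ), θ (t, lam * t)) - ∫ x in Ioi (0:ℝ), θ (0, x) := by
  have h := core_r _ (shear_contDiff hθ lam) (shear_hcs hθs lam) (a - lam)
  calc (∫ t in Ioi (0:ℝ), ∫ x in Ioi (lam * t),
        (fderiv ℝ θ (t, x) (1, 0) + a * fderiv ℝ θ (t, x) (0, 1)))
      = ∫ t in Ioi (0:ℝ), ∫ y in Ioi (0:ℝ),
          (fderiv ℝ (fun p : ℝ × ℝ => θ (p.1, lam * p.1 + p.2)) (t, y) (1, 0)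
            + (a - lam) * fderiv ℝ (fun p : ℝ × ℝ => θ (p.1, lam * p.1 + p.2)) (t, y) (0, 1)) :=
        integral_congr_ae (Filter.Eventually.of_forall (side_inner_r hθ lam a))
    _ = -(a - lam) * (∫ t in Ioi (0:ℝ), θ (t, lam * t + 0))
          - ∫ y in Ioi (0:ℝ), θ (0, lam * 0 + y) := h
    _ = -(a - lam) * (∫ t in Ioi (0:ℝ), θ (t, lam * t)) - ∫ x in Ioi (0:ℝ), θ (0, x) := by
        norm_num

lemma side_int_l {θ : ℝ × ℝ → ℝ} (hθ : ContDiff ℝ (⊤ : ℕ∞) θ) (hθs : HasCompactSupport θ)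
    (lam a : ℝ) :
    IntegrableOn (fun t => ∫ x in Iio (lam * t),
      (fderiv ℝ θ (t, x) (1, 0) + a * fderiv ℝ θ (t, x) (0, 1))) (Ioi (0:ℝ)) := by
  have hg := shear_contDiff hθ lam
  have hgs := shear_hcs hθs lam
  have hHc : Continuous (fun p : ℝ × ℝ =>
      fderiv ℝ (fun p : ℝ × ℝ => θ (p.1, lam * p.1 + p.2)) p (1, 0)
        + (a - lam) * fderiv ℝ (fun p : ℝ × ℝ => θ (p.1, lam * p.1 + p.2)) p (0, 1)) :=
    ((hg.continuous_fderiv (by simp)).clm_apply continuous_const).add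
      (continuous_const.mul ((hg.continuous_fderiv (by simp)).clm_apply continuous_const))
  have hHs : HasCompactSupport (fun p : ℝ × ℝ =>
      fderiv ℝ (fun p : ℝ × ℝ => θ (p.1, lam * p.1 + p.2)) p (1, 0)
        + (a - lam) * fderiv ℝ (fun p : ℝ × ℝ => θ (p.1, lam * p.1 + p.2)) p (0, 1)) :=
    (hgs.fderiv_apply ℝ (1, 0)).add ((hgs.fderiv_apply ℝ (0, 1)).mul_left)
  have hHi : Integrable (fun p : ℝ × ℝ =>
      fderiv ℝ (fun p : ℝ × ℝ => θ (p.1, lam * p.1 + p.2)) p (1, 0)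
        + (a - lam) * fderiv ℝ (fun p : ℝ × ℝ => θ (p.1, lam * p.1 + p.2)) p (0, 1))
      ((volume.restrict (Ioi (0:ℝ))).prod (volume.restrict (Iio (0:ℝ)))) := by
    rw [Measure.prod_restrict]
    have hvol := hHc.integrable_of_hasCompactSupport (μ := volume) hHs
    exact ((Measure.volume_eq_prod ℝ ℝ) ▸ hvol).restrict
  have h := hHi.integral_prod_left
  have heq : (fun t => ∫ x in Iio (lam * t),
      (fderiv ℝ θ (t, x) (1, 0) + a * fderiv ℝ θ (t, x) (0, 1)))
      = fun t => ∫ y in Iio (0:ℝ),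
          (fderiv ℝ (fun p : ℝ × ℝ => θ (p.1, lam * p.1 + p.2)) (t, y) (1, 0)
            + (a - lam) * fderiv ℝ (fun p : ℝ × ℝ => θ (p.1, lam * p.1 + p.2)) (t, y) (0, 1)) :=
    funext (side_inner_l hθ lam a)
  rw [IntegrableOn, heq]
  exact h

lemma side_int_r {θ : ℝ × ℝ → ℝ} (hθ : ContDiff ℝ (⊤ : ℕ∞) θ) (hθs : HasCompactSupport θ)
    (lam a : ℝ) :
    IntegrableOn (fun t => ∫ x in Ioi (lam * t),
      (fderiv ℝ θ (t, x) (1, 0) + a * fderiv ℝ θ (t, x) (0, 1))) (Ioi (0:ℝ)) := by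
  have hg := shear_contDiff hθ lam
  have hgs := shear_hcs hθs lam
  have hHc : Continuous (fun p : ℝ × ℝ =>
      fderiv ℝ (fun p : ℝ × ℝ => θ (p.1, lam * p.1 + p.2)) p (1, 0)
        + (a - lam) * fderiv ℝ (fun p : ℝ × ℝ => θ (p.1, lam * p.1 + p.2)) p (0, 1)) :=
    ((hg.continuous_fderiv (by simp)).clm_apply continuous_const).add
      (continuous_const.mul ((hg.continuous_fderiv (by simp)).clm_apply continuous_const))
  have hHs : HasCompactSupport (fun p : ℝ × ℝ =>
      fderiv ℝ (fun p : ℝ × ℝ => θ (p.1, lam * p.1 + p.2)) p (1, 0)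
        + (a - lam) * fderiv ℝ (fun p : ℝ × ℝ => θ (p.1, lam * p.1 + p.2)) p (0, 1)) :=
    (hgs.fderiv_apply ℝ (1, 0)).add ((hgs.fderiv_apply ℝ (0, 1)).mul_left)
  have hHi : Integrable (fun p : ℝ × ℝ =>
      fderiv ℝ (fun p : ℝ × ℝ => θ (p.1, lam * p.1 + p.2)) p (1, 0)
        + (a - lam) * fderiv ℝ (fun p : ℝ × ℝ => θ (p.1, lam * p.1 + p.2)) p (0, 1))
      ((volume.restrict (Ioi (0:ℝ))).prod (volume.restrict (Ioi (0:ℝ)))) := by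
    rw [Measure.prod_restrict]
    have hvol := hHc.integrable_of_hasCompactSupport (μ := volume) hHs
    exact ((Measure.volume_eq_prod ℝ ℝ) ▸ hvol).restrict
  have h := hHi.integral_prod_left
  have heq : (fun t => ∫ x in Ioi (lam * t),
      (fderiv ℝ θ (t, x) (1, 0) + a * fderiv ℝ θ (t, x) (0, 1)))
      = fun t => ∫ y in Ioi (0:ℝ),
          (fderiv ℝ (fun p : ℝ × ℝ => θ (p.1, lam * p.1 + p.2)) (t, y) (1, 0)
            + (a - lam) * fderiv ℝ (fun p : ℝ × ℝ => θ (p.1, lam * p.1 + p.2)) (t, y) (0, 1)) :=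
    funext (side_inner_r hθ lam a)
  rw [IntegrableOn, heq]
  exact h

/-- **Shock case under the compatibility condition `C_l = C_r`.**
The bounded-variation function `ψ(t,x) = ψ_l` for `x < λt`, `ψ_r` for `x > λt`
(containing no Dirac mass) is a weak solution of the linearized equation. -/
theorem stmt_2 (f : ℝ → ℝ) (hf : ContDiff ℝ 1 f)
    (ul ur : ℝ) (hne : ul ≠ ur) (ψl ψr : ℝ)
    (lam : ℝ) (hlam : lam = (f ur - f ul) / (ur - ul))
    (Cl Cr : ℝ) (hCl : Cl = (lam - deriv f ul) * ψl) (hCr : Cr = (lam - deriv f ur) * ψr)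
    (hcompat : Cl = Cr) :
    ∀ θ : ℝ × ℝ → ℝ, ContDiff ℝ (⊤ : ℕ∞) θ → HasCompactSupport θ →
      (∫ t in Ioi (0 : ℝ),
          (ψl * ∫ x in Iio (lam * t),
              (fderiv ℝ θ (t, x) (1, 0) + deriv f ul * fderiv ℝ θ (t, x) (0, 1)))
          + (ψr * ∫ x in Ioi (lam * t),
              (fderiv ℝ θ (t, x) (1, 0) + deriv f ur * fderiv ℝ θ (t, x) (0, 1))))
        + ψl * (∫ x in Iio (0 : ℝ), θ (0, x))
        + ψr * (∫ x in Ioi (0 : ℝ), θ (0, x)) = 0 := by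
  intro θ hθ hθs
  rw [integral_add ((side_int_l hθ hθs lam (deriv f ul)).const_mul ψl)
      ((side_int_r hθ hθs lam (deriv f ur)).const_mul ψr),
    integral_const_mul, integral_const_mul,
    side_l hθ hθs lam (deriv f ul), side_r hθ hθs lam (deriv f ur)]
  have h := hcompat
  rw [hCl, hCr] at h
  linear_combination (-(∫ t in Ioi (0:ℝ), θ (t, lam * t))) * h
end

section
/- If (u₋ − v) and (u₊ − v) have the same sign (i.e. (u₋ − v)(u₊ − v) > 0) and Ω > 0, then λ̄ > max(ā₋, ā₊); that is, the discontinuity of the averaged speed coefficient is fast undercompressive. -/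
open Set

/-- The averaged speed `ā(a,b) := ∫₀¹ f'(a + θ(b − a)) dθ`. -/
noncomputable def abar (f : ℝ → ℝ) (a b : ℝ) : ℝ :=
  ∫ θ in (0:ℝ)..1, deriv f (a + θ * (b - a))

/-!
The averaged speed is the chord slope: `(b − a) ā(a,b) = f b − f a`. Hence the three chord slopes
through `u₋, u₊, v` satisfy `(u₊ − u₋) λ̄ = (v − u₋) ā₋ − (v − u₊) ā₊`, and solving this linear
relation gives `(u₊ − u₋)² (λ̄ − ā₊) = Ω` and
`((u₋ − v)(u₊ − u₋))² (λ̄ − ā₋) = (u₋ − v)(u₊ − v) Ω`; both right-hand sides are positive.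
-/

theorem sub_mul_abar {f : ℝ → ℝ} (hf : ContDiff ℝ 1 f) (a b : ℝ) :
    (b - a) * abar f a b = f b - f a := by
  have hderiv : ∀ θ ∈ uIcc (0:ℝ) 1,
      HasDerivAt (fun t => f (a + t * (b - a))) ((b - a) * deriv f (a + θ * (b - a))) θ := by
    intro θ _
    have hline : HasDerivAt (fun t : ℝ => a + t * (b - a)) (b - a) θ := by
      simpa using ((hasDerivAt_id θ).mul_const (b - a)).const_add a
    rw [mul_comm]
    exact (hf.differentiable one_ne_zero _).hasDerivAt.comp θ hline
  have hint : IntervalIntegrable (fun θ => (b - a) * deriv f (a + θ * (b - a)))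
      MeasureTheory.volume 0 1 := by
    have := hf.continuous_deriv le_rfl
    exact Continuous.intervalIntegrable (by fun_prop) 0 1
  rw [abar, ← intervalIntegral.integral_const_mul,
    intervalIntegral.integral_eq_sub_of_hasDerivAt hderiv hint]
  simp

theorem sub_mul_abar_eq_chord_combination {f : ℝ → ℝ} (hf : ContDiff ℝ 1 f) (um up v : ℝ) :
    (up - um) * abar f um up = (v - um) * abar f um v - (v - up) * abar f up v := by
  rw [sub_mul_abar hf, sub_mul_abar hf, sub_mul_abar hf]
  ring

theorem stmt_6_general (f : ℝ → ℝ) (hf : ContDiff ℝ 1 f)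
    (um up v : ℝ)
    (lam am ap Ω : ℝ)
    (hlam : lam = abar f um up) (ham : am = abar f um v) (hap : ap = abar f up v)
    (hΩ : Ω = (um - v) * (up - um) * (ap - am)) :
    (um - v) * (up - v) > 0 → Ω > 0 → lam > max am ap := by
  intro hsign hΩpos
  have hchord : (up - um) * lam = (v - um) * am - (v - up) * ap := by
    subst hlam ham hap
    exact sub_mul_abar_eq_chord_combination hf um up v
  have hgap_p : (up - um) ^ 2 * (lam - ap) = Ω := by
    rw [hΩ]; linear_combination (up - um) * hchord
  have hgap_m : ((um - v) * (up - um)) ^ 2 * (lam - am) = (um - v) * (up - v) * Ω := by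
    rw [hΩ]; linear_combination (um - v) ^ 2 * (up - um) * hchord
  refine max_lt (sub_pos.1 ?_) (sub_pos.1 ?_)
  · exact pos_of_mul_pos_right (hgap_m ▸ mul_pos hsign hΩpos) (sq_nonneg _)
  · exact pos_of_mul_pos_right (hgap_p ▸ hΩpos) (sq_nonneg _)

/-- **Same sign, Ω > 0: fast undercompressive.** -/
theorem stmt_6 (f : ℝ → ℝ) (hf : ContDiff ℝ 1 f)
    (um up v : ℝ) (hne : um ≠ up)
    (lam am ap Ω : ℝ)
    (hlam : lam = abar f um up) (ham : am = abar f um v) (hap : ap = abar f up v)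
    (hΩ : Ω = (um - v) * (up - um) * (ap - am)) :
    (um - v) * (up - v) > 0 → Ω > 0 → lam > max am ap :=
  stmt_6_general f hf um up v lam am ap Ω hlam ham hap hΩ
end

section
/- If (u₋ − v) and (u₊ − v) have opposite signs (i.e. (u₋ − v)(u₊ − v) < 0) and Ω > 0, then ā₋ > λ̄ > ā₊; that is, the discontinuity of the averaged speed coefficient is compressive and satisfies the strict Lax shock inequalities. -/
/-!
By the fundamental theorem of calculus `ā(a, b)` is the chord slope `(f b - f a) / (b - a)`.
For chords through three points the slopes satisfy the identities
`(λ̄ - ā₊) (u₊ - u₋)² = Ω` and `(ā₋ - λ̄) ((u₋ - v) (u₊ - u₋))² = -(u₋ - v) (u₊ - v) Ω`,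
so `Ω > 0` together with `(u₋ - v) (u₊ - v) < 0` forces both Lax inequalities.
-/

open Set

theorem abar_eq_slope {f : ℝ → ℝ} (hf : ContDiff ℝ 1 f) {a b : ℝ} (hab : a ≠ b) :
    abar f a b = slope f a b := by
  have hba : b - a ≠ 0 := sub_ne_zero.mpr hab.symm
  have hftc : ∫ x in a..b, deriv f x = f b - f a :=
    intervalIntegral.integral_deriv_eq_sub
      (fun x _ => (hf.differentiable one_ne_zero).differentiableAt)
      ((hf.continuous_deriv le_rfl).intervalIntegrable a b)
  simp_rw [abar, mul_comm _ (b - a), intervalIntegral.integral_comp_add_mul _ hba, mul_zero,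
    mul_one, add_zero, add_sub_cancel, hftc, slope_def_module]

section ThreeChords

variable {k : Type*} [Field k] (g : k → k) (a b c : k)

theorem sub_mul_slope : (b - a) * slope g a b = g b - g a :=
  sub_smul_slope g a b

theorem slope_left_sub_slope_right_mul :
    (slope g a b - slope g b c) * (b - a) = (c - a) * (slope g a c - slope g b c) := by
  linear_combination sub_mul_slope g a b - sub_mul_slope g a c + sub_mul_slope g b c

theorem slope_outer_sub_slope_left_mul :
    (slope g a c - slope g a b) * (b - a) = (b - c) * (slope g a c - slope g b c) := by
  linear_combination sub_mul_slope g a c - sub_mul_slope g a b - sub_mul_slope g b c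

end ThreeChords

theorem slope_lt_slope_and_slope_lt_slope_of_mul_neg {k : Type*} [Field k] [LinearOrder k]
    [IsStrictOrderedRing k] {g : k → k} {a b c : k} (hc : (a - c) * (b - c) < 0)
    (hΩ : 0 < (a - c) * (b - a) * (slope g b c - slope g a c)) :
    slope g b c < slope g a b ∧ slope g a b < slope g a c := by
  have h₁ : (slope g a b - slope g b c) * (b - a) ^ 2
      = (a - c) * (b - a) * (slope g b c - slope g a c) := by
    linear_combination (b - a) * slope_left_sub_slope_right_mul g a b c
  have h₂ : (slope g a c - slope g a b) * ((a - c) * (b - a)) ^ 2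
      = -((a - c) * (b - c)) * ((a - c) * (b - a) * (slope g b c - slope g a c)) := by
    linear_combination (a - c) ^ 2 * (b - a) * slope_outer_sub_slope_left_mul g a b c
  constructor
  · exact sub_pos.mp (pos_of_mul_pos_left (h₁.symm ▸ hΩ) (sq_nonneg (b - a)))
  · refine sub_pos.mp (pos_of_mul_pos_left ?_ (sq_nonneg ((a - c) * (b - a))))
    rw [h₂]
    exact mul_pos (neg_pos.mpr hc) hΩ

theorem stmt_7_general (f : ℝ → ℝ) (hf : ContDiff ℝ 1 f)
    (um up v : ℝ)
    (lam am ap Ω : ℝ)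
    (hlam : lam = abar f um up) (ham : am = abar f um v) (hap : ap = abar f up v)
    (hΩ : Ω = (um - v) * (up - um) * (ap - am)) :
    (um - v) * (up - v) < 0 → Ω > 0 → ap < lam ∧ lam < am := by
  intro hsign hΩpos
  have hmv : um ≠ v := sub_ne_zero.mp (left_ne_zero_of_mul hsign.ne)
  have hpv : up ≠ v := sub_ne_zero.mp (right_ne_zero_of_mul hsign.ne)
  have hmp : um ≠ up := by
    rintro rfl
    exact (mul_self_nonneg _).not_gt hsign
  subst hlam ham hap hΩ
  rw [abar_eq_slope hf hmp, abar_eq_slope hf hmv, abar_eq_slope hf hpv] at *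
  exact slope_lt_slope_and_slope_lt_slope_of_mul_neg hsign hΩpos

/-- **Opposite signs, Ω > 0: compressive with strict Lax inequalities `ā₋ > λ̄ > ā₊`.** -/
theorem stmt_7 (f : ℝ → ℝ) (hf : ContDiff ℝ 1 f)
    (um up v : ℝ) (hne : um ≠ up)
    (lam am ap Ω : ℝ)
    (hlam : lam = abar f um up) (ham : am = abar f um v) (hap : ap = abar f up v)
    (hΩ : Ω = (um - v) * (up - um) * (ap - am)) :
    (um - v) * (up - v) < 0 → Ω > 0 → ap < lam ∧ lam < am :=
  stmt_7_general f hf um up v lam am ap Ω hlam ham hap hΩ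
end

section
/- If (u₋ − v) and (u₊ − v) have opposite signs (i.e. (u₋ − v)(u₊ − v) < 0) and Ω < 0, then ā₋ < λ̄ < ā₊; that is, the discontinuity of the averaged speed coefficient is a rarefaction-shock. -/
/-!
Write `A = u₋ − v`, `B = u₊ − v`. By the fundamental theorem of calculus `(b − a) ā(a,b) = f b − f a`,
so telescoping `f u₊ − f u₋ = (f u₊ − f v) − (f u₋ − f v)` gives `(B − A) λ̄ = B ā₊ − A ā₋`.
When `A B < 0` this exhibits `λ̄` as a strict convex combination of `ā₋` and `ā₊`, and
`Ω = A (B − A) (ā₊ − ā₋)` with `A (B − A) = A B − A² < 0` makes `Ω < 0` equivalent to `ā₋ < ā₊`.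
-/

open Set

theorem sub_mul_abar_eq_sub {f : ℝ → ℝ} (hf : ContDiff ℝ 1 f) (um up v : ℝ) :
    (up - um) * abar f um up = (up - v) * abar f up v - (um - v) * abar f um v := by
  linear_combination sub_mul_abar hf um up + sub_mul_abar hf up v - sub_mul_abar hf um v

theorem lt_and_lt_of_sub_mul_eq {a b x y m : ℝ} (hab : a * b < 0) (hxy : x < y)
    (h : (b - a) * m = b * y - a * x) : x < m ∧ m < y := by
  have hlow : (b - a) * (m - x) = b * (y - x) := by linear_combination h
  have hhigh : (b - a) * (y - m) = -a * (y - x) := by linear_combination -h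
  rcases lt_or_gt_of_ne (left_ne_zero_of_mul hab.ne) with ha | ha
  · have hb : 0 < b := pos_of_mul_neg_right hab ha.le
    constructor <;> nlinarith
  · have hb : b < 0 := neg_of_mul_neg_right hab ha.le
    constructor <;> nlinarith

theorem stmt_8_general (f : ℝ → ℝ) (hf : ContDiff ℝ 1 f)
    (um up v : ℝ)
    (lam am ap Ω : ℝ)
    (hlam : lam = abar f um up) (ham : am = abar f um v) (hap : ap = abar f up v)
    (hΩ : Ω = (um - v) * (up - um) * (ap - am)) :
    (um - v) * (up - v) < 0 → Ω < 0 → am < lam ∧ lam < ap := by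
  intro hsign hΩneg
  have hmean : ((up - v) - (um - v)) * lam = (up - v) * ap - (um - v) * am := by
    subst hlam ham hap
    linear_combination sub_mul_abar_eq_sub hf um up v
  have hcoef : (um - v) * (up - um) < 0 := by nlinarith [sq_nonneg (um - v)]
  have ham_lt_ap : am < ap := by
    subst hΩ
    exact sub_pos.mp (pos_of_mul_neg_right hΩneg hcoef.le)
  exact lt_and_lt_of_sub_mul_eq hsign ham_lt_ap hmean

/-- **Opposite signs, Ω < 0: rarefaction-shock `ā₋ < λ̄ < ā₊`.** -/
theorem stmt_8 (f : ℝ → ℝ) (hf : ContDiff ℝ 1 f)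
    (um up v : ℝ) (hne : um ≠ up)
    (lam am ap Ω : ℝ)
    (hlam : lam = abar f um up) (ham : am = abar f um v) (hap : ap = abar f up v)
    (hΩ : Ω = (um - v) * (up - um) * (ap - am)) :
    (um - v) * (up - v) < 0 → Ω < 0 → am < lam ∧ lam < ap :=
  stmt_8_general f hf um up v lam am ap Ω hlam ham hap hΩ
end

section
/- If v ∉ {u₋, u₊} and ā₊ = ā₋ (equivalently Ω = 0), then λ̄ = ā₋ = ā₊; that is, in the degenerate case the averaged speed coefficient takes the same value on both sides of the discontinuity and this common value equals the propagation speed. Consequently, the sign of Ω, together with the relative position of v with respect to u₋ and u₊, uniquely determines whether the discontinuity of the averaged speed coefficient is compressive, slow undercompressive, fast undercompressive, or a rarefaction-shock. -/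
open Set

/-!
For `C¹` flux the averaged speed is the chord slope: `ā(a,b) (b − a) = f(b) − f(a)`. Adding the
chords from `u₋` to `v` and from `v` to `u₊` gives the chord from `u₋` to `u₊`, which yields
`(λ̄ − ā₊)(u₊ − u₋) = (u₋ − v)(ā₊ − ā₋)` and `(λ̄ − ā₋)(u₊ − u₋) = (u₊ − v)(ā₊ − ā₋)`.
Hence `λ̄ − ā₊` has the sign of `Ω`, and `λ̄ − ā₋` that of `Ω (u₋ − v)(u₊ − v)`.
-/

section AveragedSpeed

variable {f : ℝ → ℝ}

theorem abar_mul_sub (hf : ContDiff ℝ 1 f) (a b : ℝ) :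
    abar f a b * (b - a) = f b - f a := by
  rcases eq_or_ne b a with rfl | hba
  · simp
  have hc : b - a ≠ 0 := sub_ne_zero.mpr hba
  have h_rescale : abar f a b = (b - a)⁻¹ * ∫ x in a..b, deriv f x := by
    have h_affine : ∀ θ : ℝ, a + θ * (b - a) = (b - a) * θ + a := fun θ => by ring
    simp_rw [abar, h_affine, intervalIntegral.integral_comp_mul_add (deriv f) hc a]
    simp
  have h_ftc : ∫ x in a..b, deriv f x = f b - f a :=
    intervalIntegral.integral_deriv_eq_sub
      (fun x _ => (hf.differentiable one_ne_zero).differentiableAt)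
      ((hf.continuous_deriv le_rfl).intervalIntegrable a b)
  rw [h_rescale, h_ftc]
  field_simp

theorem abar_sub_abar_right_mul_sub (hf : ContDiff ℝ 1 f) (a b v : ℝ) :
    (abar f a b - abar f b v) * (b - a) = (a - v) * (abar f b v - abar f a v) := by
  linear_combination abar_mul_sub hf a b + abar_mul_sub hf b v - abar_mul_sub hf a v

theorem abar_sub_abar_left_mul_sub (hf : ContDiff ℝ 1 f) (a b v : ℝ) :
    (abar f a b - abar f a v) * (b - a) = (b - v) * (abar f b v - abar f a v) := by
  linear_combination abar_mul_sub hf a b + abar_mul_sub hf b v - abar_mul_sub hf a v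

end AveragedSpeed

theorem sign_eq_of_mul_sq_eq {α : Type*} [Ring α] [LinearOrder α] [IsStrictOrderedRing α]
    {x d y : α} (hd : d ≠ 0) (h : x * d ^ 2 = y) :
    SignType.sign x = SignType.sign y := by
  rw [← h, sign_mul, sign_pos (by positivity : 0 < d ^ 2), mul_one]

/-- **Degenerate case and classification.** If `v ∉ {u₋, u₊}` and `ā₊ = ā₋`
(equivalently `Ω = 0`), then `λ̄ = ā₋ = ā₊`.  Consequently, the sign of `Ω`
together with the relative position of `v` with respect to `u₋, u₊` uniquely
determines the nature (compressive, slow/fast undercompressive, or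
rarefaction-shock) of the discontinuity of the averaged speed coefficient. -/
theorem stmt_9 (f : ℝ → ℝ) (hf : ContDiff ℝ 1 f)
    (um up v : ℝ) (hne : um ≠ up)
    (lam am ap Ω : ℝ)
    (hlam : lam = abar f um up) (ham : am = abar f um v) (hap : ap = abar f up v)
    (hΩ : Ω = (um - v) * (up - um) * (ap - am)) :
    (v ∉ ({um, up} : Set ℝ) → ap = am → lam = am ∧ lam = ap) ∧
    ((um - v) * (up - v) > 0 → Ω < 0 → lam < min am ap) ∧
    ((um - v) * (up - v) > 0 → Ω > 0 → lam > max am ap) ∧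
    ((um - v) * (up - v) < 0 → Ω > 0 → ap < lam ∧ lam < am) ∧
    ((um - v) * (up - v) < 0 → Ω < 0 → am < lam ∧ lam < ap) := by
  subst hlam ham hap hΩ
  have hd : up - um ≠ 0 := sub_ne_zero.mpr hne.symm
  have h_right := abar_sub_abar_right_mul_sub hf um up v
  have h_left := abar_sub_abar_left_mul_sub hf um up v
  set lam := abar f um up
  set am := abar f um v
  set ap := abar f up v
  have h_sign_right :
      SignType.sign (lam - ap) = SignType.sign ((um - v) * (up - um) * (ap - am)) :=
    sign_eq_of_mul_sq_eq hd (by linear_combination (up - um) * h_right)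
  have h_sign_left_of (hv : um - v ≠ 0) : SignType.sign (lam - am) =
      SignType.sign ((um - v) * (up - um) * (ap - am)) * SignType.sign ((um - v) * (up - v)) := by
    rw [← sign_mul]
    exact sign_eq_of_mul_sq_eq (mul_ne_zero hd hv)
      (by linear_combination (up - um) * (um - v) ^ 2 * h_left)
  refine ⟨fun _ h_eq => ?_, ?_, ?_, ?_, ?_⟩
  · have h_am : lam = am := by
      simpa [h_eq, hd, sub_eq_zero] using h_left
    exact ⟨h_am, h_am.trans h_eq.symm⟩
  all_goals
    intro hQ hΩ
    have h_sign_left_v := h_sign_left_of fun h => by simp [h] at hQ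
    simp only [sign_pos, sign_neg, hQ, hΩ, mul_one, mul_neg, neg_neg, sign_eq_one_iff,
      sign_eq_neg_one_iff, sub_pos, sub_neg] at h_sign_right h_sign_left_v
    first
    | exact lt_min h_sign_left_v h_sign_right
    | exact max_lt h_sign_left_v h_sign_right
    | exact ⟨h_sign_right, h_sign_left_v⟩
    | exact ⟨h_sign_left_v, h_sign_right⟩
end
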